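/- arXiv:2310.05334 — 5 statements merged into one kernel-verified Lean document; each statement's English description precedes it below -/
import Mathlib

section
/- Let n ≥ 1 and let Z, W ∈ ℍ_n. Then the matrices conj(Z) − W, Z − conj(W) and W − conj(Z) are invertible, and the cross-ratio matrix ρ(Z,W) = (Z−W)(conj(Z)−W)^{−1}(conj(Z)−conj(W))(Z−conj(W))^{−1} satisfies det(1_n − ρ(Z,W)) = 4^n · det(Im Z) · det(Im W) / |det(W − conj(Z))|². Equivalently, in terms of the radial coordinates r_j(Z,W) defined by tanh²(r_j(Z,W)) = ρ_j for the eigenvalues ρ_j of ρ(Z,W), one has Π_{j=1}^n cosh^{−2}(r_j(Z,W)) = 4^n det(Im Z) det(Im W) / |det(W − conj(Z))|². -/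
/-
A symmetric `M = X + iY` with `Y` positive definite is invertible: if `(X + iY)(a + ib) = 0` with
`a, b` real, then `Xa = Yb` and `Xb = -Ya`, so `aᵀYa + bᵀYb = bᵀXa - aᵀXb = 0` by symmetry of `X`,
forcing `a = b = 0`. This applies to `Z - conj W` and `W - conj Z`, whose imaginary part is
`Im Z + Im W`.

With `Z' = conj Z`, `W' = conj W`, the identity
`1 - (Z - W)(Z' - W)⁻¹(Z' - W')(Z - W')⁻¹ = (Z' - Z)(Z' - W)⁻¹(W - W')(Z - W')⁻¹`
holds for any matrices, since `Z' - W' = (Z' - W) + (W - W')` and `Z' - Z = (Z' - W) - (Z - W)`.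
Now `Z' - Z = -2i Im Z`, `W - W' = 2i Im W`, and `Z - W'` is the conjugate of `Z' - W`, so the
two inverted determinants multiply to `|det(W - conj Z)|²`.
-/

open Matrix

noncomputable section

/-- Entrywise imaginary part of a complex matrix. -/
def imPart {n : ℕ} (Z : Matrix (Fin n) (Fin n) ℂ) : Matrix (Fin n) (Fin n) ℝ :=
  Matrix.of fun i j => (Z i j).im

/-- The Siegel upper half-space `ℍ_n`: symmetric complex matrices with positive
definite imaginary part. -/
def SiegelHalfSpace (n : ℕ) : Set (Matrix (Fin n) (Fin n) ℂ) :=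
  {Z | Z.IsSymm ∧ (imPart Z).PosDef}

/-- Entrywise complex conjugate of a matrix. -/
def conjM {n : ℕ} (Z : Matrix (Fin n) (Fin n) ℂ) : Matrix (Fin n) (Fin n) ℂ :=
  Z.map (starRingEnd ℂ)

/-- The cross-ratio matrix
`ρ(Z,W) = (Z−W)(conj Z−W)⁻¹(conj Z−conj W)(Z−conj W)⁻¹`. -/
def crossRatio {n : ℕ} (Z W : Matrix (Fin n) (Fin n) ℂ) : Matrix (Fin n) (Fin n) ℂ :=
  (Z - W) * (conjM Z - W)⁻¹ * (conjM Z - conjM W) * (Z - conjM W)⁻¹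

open Complex ComplexConjugate

section ReIm

variable {ι : Type*} [Fintype ι]

lemma re_mulVec (M : Matrix ι ι ℂ) (v : ι → ℂ) :
    re ∘ (M *ᵥ v) = M.map re *ᵥ (re ∘ v) - M.map im *ᵥ (im ∘ v) := by
  ext i
  simp [mulVec, dotProduct, re_sum, Finset.sum_sub_distrib]

lemma im_mulVec (M : Matrix ι ι ℂ) (v : ι → ℂ) :
    im ∘ (M *ᵥ v) = M.map re *ᵥ (im ∘ v) + M.map im *ᵥ (re ∘ v) := by
  ext i
  simp [mulVec, dotProduct, im_sum, Finset.sum_add_distrib]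

variable [DecidableEq ι]

theorem isUnit_of_isSymm_of_posDef_map_im {M : Matrix ι ι ℂ} (hM : M.IsSymm)
    (hY : (M.map im).PosDef) : IsUnit M := by
  rw [isUnit_iff_isUnit_det, isUnit_iff_ne_zero]
  intro hdet
  obtain ⟨v, hv, hMv⟩ := exists_mulVec_eq_zero_iff.mpr hdet
  set X := M.map re
  set Y := M.map im
  have hXa : X *ᵥ (re ∘ v) = Y *ᵥ (im ∘ v) := by
    have := re_mulVec M v
    rw [hMv] at this
    exact sub_eq_zero.mp this.symm
  have hXb : X *ᵥ (im ∘ v) = -(Y *ᵥ (re ∘ v)) := by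
    have := im_mulVec M v
    rw [hMv] at this
    exact eq_neg_of_add_eq_zero_left this.symm
  have hXT : Xᵀ = X := by rw [← transpose_map, hM]
  have hsum : (re ∘ v) ⬝ᵥ Y *ᵥ (re ∘ v) + (im ∘ v) ⬝ᵥ Y *ᵥ (im ∘ v) = 0 := by
    calc _ = (im ∘ v) ⬝ᵥ X *ᵥ (re ∘ v) - (re ∘ v) ⬝ᵥ X *ᵥ (im ∘ v) := by
            rw [hXa, hXb, dotProduct_neg]; ring
      _ = 0 := by rw [dotProduct_mulVec, ← mulVec_transpose, hXT, dotProduct_comm, sub_self]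
  have hpos : ∀ c : ι → ℝ, c ≠ 0 → 0 < c ⬝ᵥ Y *ᵥ c := fun c hc => by
    simpa using hY.dotProduct_mulVec_pos hc
  have hnonneg : ∀ c : ι → ℝ, 0 ≤ c ⬝ᵥ Y *ᵥ c := fun c => by
    simpa using hY.posSemidef.dotProduct_mulVec_nonneg c
  have hre : re ∘ v = 0 := by
    by_contra h
    linarith [hpos _ h, hnonneg (im ∘ v)]
  have him : im ∘ v = 0 := by
    by_contra h
    linarith [hpos _ h, hnonneg (re ∘ v)]
  exact hv (funext fun i => Complex.ext (congrFun hre i) (congrFun him i))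

end ReIm

theorem one_sub_mul_inv_mul_mul_inv {ι R : Type*} [Fintype ι] [DecidableEq ι] [CommRing R]
    {Z Z' W W' : Matrix ι ι R} (hB : IsUnit (Z' - W)) (hD : IsUnit (Z - W')) :
    1 - (Z - W) * (Z' - W)⁻¹ * (Z' - W') * (Z - W')⁻¹ =
      (Z' - Z) * (Z' - W)⁻¹ * (W - W') * (Z - W')⁻¹ := by
  rw [isUnit_iff_isUnit_det] at hB hD
  suffices h : (Z - W') - (Z - W) * (Z' - W)⁻¹ * (Z' - W') = (Z' - Z) * (Z' - W)⁻¹ * (W - W') by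
    rw [← h, Matrix.sub_mul (Z - W'), mul_nonsing_inv _ hD]
  rw [show Z' - W' = (Z' - W) + (W - W') by abel, show Z' - Z = (Z' - W) - (Z - W) by abel,
    mul_add, Matrix.mul_assoc (Z - W), nonsing_inv_mul _ hB, Matrix.mul_one,
    Matrix.sub_mul (Z' - W), mul_nonsing_inv _ hB, Matrix.sub_mul 1, Matrix.one_mul]
  abel

section Siegel

variable {n : ℕ}

lemma conjM_sub (A B : Matrix (Fin n) (Fin n) ℂ) : conjM (A - B) = conjM A - conjM B :=
  Matrix.map_sub _ (map_sub _) A B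

lemma conjM_conjM (A : Matrix (Fin n) (Fin n) ℂ) : conjM (conjM A) = A := by
  ext i j
  simp [conjM]

lemma det_conjM (A : Matrix (Fin n) (Fin n) ℂ) : (conjM A).det = conj A.det :=
  ((starRingEnd ℂ).map_det A).symm

lemma isSymm_conjM {A : Matrix (Fin n) (Fin n) ℂ} (h : A.IsSymm) : (conjM A).IsSymm := by
  unfold conjM Matrix.IsSymm at *
  rw [← transpose_map, h]

lemma imPart_sub_conjM (A B : Matrix (Fin n) (Fin n) ℂ) :
    imPart (A - conjM B) = imPart A + imPart B := by
  ext i j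
  simp [imPart, conjM]

lemma sub_conjM_self (A : Matrix (Fin n) (Fin n) ℂ) :
    A - conjM A = (2 * I) • (imPart A).map ofReal := by
  ext i j
  simp only [Matrix.sub_apply, conjM, map_apply, Matrix.smul_apply, imPart, of_apply, smul_eq_mul,
    sub_conj]
  push_cast
  ring

lemma det_sub_conjM_self (A : Matrix (Fin n) (Fin n) ℂ) :
    (A - conjM A).det = (2 * I) ^ n * (imPart A).det := by
  rw [sub_conjM_self, det_smul, Fintype.card_fin,
    show (imPart A).map ofReal = ofRealHom.mapMatrix (imPart A) from rfl, ← RingHom.map_det]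
  rfl

lemma isUnit_sub_conjM {Z W : Matrix (Fin n) (Fin n) ℂ} (hZ : Z ∈ SiegelHalfSpace n)
    (hW : W ∈ SiegelHalfSpace n) : IsUnit (Z - conjM W) :=
  isUnit_of_isSymm_of_posDef_map_im (hZ.1.sub (isSymm_conjM hW.1))
    (show (imPart (Z - conjM W)).PosDef by rw [imPart_sub_conjM]; exact hZ.2.add hW.2)

lemma det_conjM_sub_mul_det_sub_conjM (Z W : Matrix (Fin n) (Fin n) ℂ) :
    (conjM Z - W).det * (Z - conjM W).det = ((‖(W - conjM Z).det‖ ^ 2 : ℝ) : ℂ) := by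
  have hconj : Z - conjM W = conjM (conjM Z - W) := by rw [conjM_sub, conjM_conjM]
  rw [hconj, det_conjM, mul_conj, normSq_eq_norm_sq,
    ← neg_sub, det_neg, norm_mul, norm_pow, norm_neg, norm_one, one_pow, one_mul]

end Siegel

theorem crossRatio_det_identity_general (n : ℕ)
    (Z W : Matrix (Fin n) (Fin n) ℂ)
    (hZ : Z ∈ SiegelHalfSpace n) (hW : W ∈ SiegelHalfSpace n) :
    IsUnit (conjM Z - W) ∧ IsUnit (Z - conjM W) ∧ IsUnit (W - conjM Z) ∧
      ((1 : Matrix (Fin n) (Fin n) ℂ) - crossRatio Z W).det =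
        (((4 : ℝ) ^ n * (imPart Z).det * (imPart W).det /
            ‖(W - conjM Z).det‖ ^ 2 : ℝ) : ℂ) := by
  have hWZ : IsUnit (W - conjM Z) := isUnit_sub_conjM hW hZ
  have hZW : IsUnit (Z - conjM W) := isUnit_sub_conjM hZ hW
  have hZW' : IsUnit (conjM Z - W) := by simpa only [neg_sub] using hWZ.neg
  refine ⟨hZW', hZW, hWZ, ?_⟩
  have hfour : -1 * (2 * I) * (2 * I) = 4 := by linear_combination -4 * I_sq
  calc ((1 : Matrix (Fin n) (Fin n) ℂ) - crossRatio Z W).det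
      = (-1) ^ n * (2 * I) ^ n * (2 * I) ^ n * (imPart Z).det * (imPart W).det /
          ((conjM Z - W).det * (Z - conjM W).det) := by
        rw [crossRatio, one_sub_mul_inv_mul_mul_inv hZW' hZW, det_mul, det_mul, det_mul,
          det_nonsing_inv, det_nonsing_inv, ← neg_sub, det_neg, det_sub_conjM_self,
          det_sub_conjM_self, Fintype.card_fin]
        simp only [Ring.inverse_eq_inv']
        ring
    _ = _ := by
        rw [det_conjM_sub_mul_det_sub_conjM, ← mul_pow, ← mul_pow, hfour]
        push_cast
        ring

/-- **The cross-ratio determinant identity.**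
For `Z, W ∈ ℍ_n` the matrices `conj Z − W`, `Z − conj W` and `W − conj Z` are invertible
and `det(1 − ρ(Z,W)) = 4^n · det(Im Z) · det(Im W) / |det(W − conj Z)|²`; in terms of the
radial coordinates `r_j(Z,W)` this says
`Π_j cosh^{-2}(r_j(Z,W)) = 4^n det(Im Z) det(Im W) / |det(W − conj Z)|²`. -/
theorem crossRatio_det_identity (n : ℕ) (hn : 1 ≤ n)
    (Z W : Matrix (Fin n) (Fin n) ℂ)
    (hZ : Z ∈ SiegelHalfSpace n) (hW : W ∈ SiegelHalfSpace n) :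
    IsUnit (conjM Z - W) ∧ IsUnit (Z - conjM W) ∧ IsUnit (W - conjM Z) ∧
      ((1 : Matrix (Fin n) (Fin n) ℂ) - crossRatio Z W).det =
        (((4 : ℝ) ^ n * (imPart Z).det * (imPart W).det /
            ‖(W - conjM Z).det‖ ^ 2 : ℝ) : ℂ) :=
  crossRatio_det_identity_general n Z W hZ hW
end
end

section
/- Let n ≥ 1 and let k ∈ ℂ^{2n×2n} be complex symplectic orthogonal, i.e. kᵗ J_n k = J_n and k kᵗ = 1_{2n}. Suppose k = k₀ k_h, where k₀ is a real symplectic orthogonal matrix and k_h = [[A, B],[−B, A]] with A, B ∈ ℂ^{n×n} satisfying AAᵗ + BBᵗ = 1_n, ABᵗ = BAᵗ, conj(A)ᵗ = A and conj(B)ᵗ = −B, so that h := A + iB is Hermitian. Let R = diag(r_1,…,r_n) with r_j ≥ 0, set r = diag(R, −R), and suppose k·exp(r)·conj(k)ᵗ = u·exp(ϱ)·conj(u)ᵗ, where u ∈ Sp_n(ℂ) ∩ U(2n) is unitary symplectic and ϱ = diag(P, −P) with P = diag(ϱ_1,…,ϱ_n) real. Then det(h) ≤ exp(Σ_{j=1}^n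 |ϱ_j|) / Π_{j=1}^n cosh(r_j). -/
open scoped BigOperators
open Matrix

noncomputable section

/-- The standard complex symplectic form matrix `J_n = [[0, 1],[−1, 0]]`. -/
def JmatC (n : ℕ) : Matrix (Fin n ⊕ Fin n) (Fin n ⊕ Fin n) ℂ :=
  Matrix.fromBlocks 0 1 (-1) 0

/-- The real symplectic form matrix `J_n`. -/
def JmatR (n : ℕ) : Matrix (Fin n ⊕ Fin n) (Fin n ⊕ Fin n) ℝ :=
  Matrix.fromBlocks 0 1 (-1) 0

/-- The diagonal matrix `exp(diag(v, −v))` (the matrix exponential of a diagonal matrix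
is the entrywise exponential of the diagonal). -/
def expDiag {n : ℕ} (v : Fin n → ℝ) : Matrix (Fin n ⊕ Fin n) (Fin n ⊕ Fin n) ℂ :=
  Matrix.fromBlocks (Matrix.diagonal fun j => ((Real.exp (v j) : ℝ) : ℂ)) 0 0
    (Matrix.diagonal fun j => ((Real.exp (-(v j)) : ℝ) : ℂ))

/-!
For `e = ±i` put `P_e = [1 | e • 1]`. Then `P_e J_n = -e P_e`, and `k_h = A ⊗ 1 + B ⊗ J_n` acts on
the rows of `P_e` as `A - e • B`. Conjugating `k exp(r) kᴴ = u exp(ϱ) uᴴ` by `P_e k₀ᵀ` therefore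
gives `(A - e • B) diag(2 cosh r) (A - e • B)ᴴ = Y exp(ϱ) Yᴴ` with `Y = P_e k₀ᵀ u`, `Y Yᴴ = 2`.
By Cauchy–Binet,
`det (Y D Yᴴ)` is a nonnegative combination of the products `∏_{s ∈ S} D_s`, each of which is at
most `exp (∑ |ϱ_j|)` for `D = exp(ϱ)`; hence `|det (A ∓ i B)|² ∏ cosh r_j ≤ exp (∑ |ϱ_j|)`.
Finally `(A + i B)(A - i B)ᵀ = 1`, so the two determinants have product `1` and
`|det (A + i B)| ≤ max (|det (A + i B)|², |det (A - i B)|²)`.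
-/

open Finset Function
open scoped ComplexOrder

namespace Matrix

section CauchyBinet

variable {ι κ R : Type*} [Fintype ι] [DecidableEq ι] [CommRing R]

theorem det_mul_eq_sum_prod_mul_det_submatrix [Fintype κ] (M : Matrix ι κ R) (N : Matrix κ ι R) :
    (M * N).det = ∑ p : ι → κ, (∏ i, N (p i) i) * (M.submatrix id p).det := by
  calc (M * N).det
      = ∑ σ : Equiv.Perm ι, ∑ p : ι → κ,
          (Equiv.Perm.sign σ : R) * ∏ i, M (σ i) (p i) * N (p i) i := by
        simp only [det_apply', mul_apply, prod_univ_sum, mul_sum]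
        rfl
    _ = ∑ p : ι → κ, (∏ i, N (p i) i) * (M.submatrix id p).det := by
        rw [sum_comm]
        refine sum_congr rfl fun p _ => ?_
        simp only [det_apply', mul_sum, prod_mul_distrib, submatrix_apply, id_eq]
        exact sum_congr rfl fun σ _ => by ring

theorem det_submatrix_eq_zero_of_not_injective (M : Matrix ι κ R)
    {p : ι → κ} (hp : ¬ Injective p) : (M.submatrix id p).det = 0 := by
  obtain ⟨i, j, hpij, hij⟩ := not_injective_iff.mp hp
  exact det_zero_of_column_eq hij fun k => by simp [hpij]

variable [Fintype κ] [DecidableEq κ] [StarRing R]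

def cauchyBinetCoeff (X : Matrix ι κ R) (S : Finset κ) : R :=
  ∑ p : ι → κ with univ.image p = S, (∏ i, Xᴴ (p i) i) * (X.submatrix id p).det

theorem det_mul_diagonal_mul_conjTranspose (X : Matrix ι κ R) (d : κ → R) :
    (X * diagonal d * Xᴴ).det = ∑ S : Finset κ, (∏ s ∈ S, d s) * X.cauchyBinetCoeff S := by
  have hterm (p : ι → κ) : (∏ i, (diagonal d * Xᴴ) (p i) i) * (X.submatrix id p).det
      = (∏ s ∈ univ.image p, d s) * ((∏ i, Xᴴ (p i) i) * (X.submatrix id p).det) := by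
    by_cases hp : Injective p
    · simp only [diagonal_mul, prod_mul_distrib, prod_image fun a _ b _ h => hp h, mul_assoc]
    · simp [det_submatrix_eq_zero_of_not_injective X hp]
  rw [Matrix.mul_assoc, det_mul_eq_sum_prod_mul_det_submatrix]
  simp only [hterm, cauchyBinetCoeff, mul_sum]
  rw [← sum_fiberwise univ fun p : ι → κ => univ.image p]
  refine sum_congr rfl fun S _ => sum_congr rfl fun p hp => ?_
  rw [(mem_filter.mp hp).2]

theorem cauchyBinetCoeff_eq_zero (X : Matrix ι κ R) {S : Finset κ} (hS : #S ≠ Fintype.card ι) :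
    X.cauchyBinetCoeff S = 0 := by
  refine sum_eq_zero fun p hp => ?_
  have hp : ¬ Injective p := fun hinj => hS <| by
    rw [← (mem_filter.mp hp).2, card_image_of_injective _ hinj, card_univ]
  rw [det_submatrix_eq_zero_of_not_injective X hp, mul_zero]

theorem cauchyBinetCoeff_eq_det (X : Matrix ι κ R) {S : Finset κ} (hS : #S = Fintype.card ι) :
    X.cauchyBinetCoeff S
      = (X.submatrix id ((↑) : S → κ) * (X.submatrix id ((↑) : S → κ))ᴴ).det := by
  set Y := X.submatrix id ((↑) : S → κ)
  have hY : X * diagonal (fun s => if s ∈ S then (1 : R) else 0) * Xᴴ = Y * Yᴴ := by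
    ext i j
    rw [mul_apply, mul_apply]
    simp only [mul_diagonal, Y, submatrix_apply, conjTranspose_apply, id_eq,
      mul_ite, mul_one, mul_zero, ite_mul, zero_mul, sum_ite_mem, univ_inter]
    exact (sum_coe_sort S _).symm
  rw [← hY, det_mul_diagonal_mul_conjTranspose, sum_eq_single S]
  · rw [prod_boole, if_pos fun _ h => h, one_mul]
  · intro T _ hTS
    rw [prod_boole]
    split_ifs with hT
    · rw [cauchyBinetCoeff_eq_zero X fun h => hTS (eq_of_subset_of_card_le hT (by omega)), mul_zero]
    · rw [zero_mul]
  · simp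

variable {𝕜 : Type*} [RCLike 𝕜]

theorem cauchyBinetCoeff_nonneg (X : Matrix ι κ 𝕜) (S : Finset κ) : 0 ≤ X.cauchyBinetCoeff S := by
  by_cases hS : #S = Fintype.card ι
  · rw [cauchyBinetCoeff_eq_det X hS]
    exact (posSemidef_self_mul_conjTranspose _).det_nonneg
  · rw [cauchyBinetCoeff_eq_zero X hS]

theorem det_mul_diagonal_mul_conjTranspose_le (X : Matrix ι κ 𝕜) (d : κ → ℝ) (c : ℝ)
    (hc : ∀ S : Finset κ, ∏ s ∈ S, d s ≤ c) :
    (X * diagonal (fun s => (d s : 𝕜)) * Xᴴ).det ≤ c * (X * Xᴴ).det := by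
  have h1 := det_mul_diagonal_mul_conjTranspose X fun _ => 1
  rw [diagonal_one, Matrix.mul_one] at h1
  simp only [prod_const_one, one_mul] at h1
  rw [det_mul_diagonal_mul_conjTranspose, h1, mul_sum]
  refine sum_le_sum fun S _ => mul_le_mul_of_nonneg_right ?_ (cauchyBinetCoeff_nonneg X S)
  exact_mod_cast hc S

end CauchyBinet

variable {m : Type*} [Fintype m] [DecidableEq m] {R : Type*} [CommRing R]

variable (m) in
def fromColsOneSmul (e : R) : Matrix m (m ⊕ m) R := fromCols 1 (e • 1)

theorem fromColsOneSmul_mul_fromBlocks {e : R} (he : e * e = -1) (A B : Matrix m m R) :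
    fromColsOneSmul m e * fromBlocks A B (-B) A = (A - e • B) * fromColsOneSmul m e := by
  rw [fromColsOneSmul, fromCols_mul_fromBlocks, mul_fromCols]
  congr 1
  · simp [sub_eq_add_neg]
  · simp only [Matrix.one_mul, smul_mul, Matrix.mul_smul, Matrix.mul_one, smul_sub, smul_smul, he,
      neg_smul, one_smul]
    abel

theorem fromColsOneSmul_mul_fromBlocks_mul_conjTranspose [StarRing R] (e : R)
    (D D' : Matrix m m R) :
    fromColsOneSmul m e * fromBlocks D 0 0 D' * (fromColsOneSmul m e)ᴴ
      = D + (e * star e) • D' := by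
  rw [fromColsOneSmul, fromCols_mul_fromBlocks, conjTranspose_fromCols_eq_fromRows_conjTranspose,
    fromCols_mul_fromRows]
  simp [smul_smul, mul_comm]

theorem fromColsOneSmul_mul_conjTranspose [StarRing R] (e : R) :
    fromColsOneSmul m e * (fromColsOneSmul m e)ᴴ = (1 + e * star e) • 1 := by
  rw [fromColsOneSmul, conjTranspose_fromCols_eq_fromRows_conjTranspose, fromCols_mul_fromRows]
  simp [add_smul, smul_smul, mul_comm]

theorem det_add_smul_mul_det_sub_smul {e : R} (he : e * e = -1) {A B : Matrix m m R}
    (horth : A * Aᵀ + B * Bᵀ = 1) (hcomm : A * Bᵀ = B * Aᵀ) :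
    (A + e • B).det * (A - e • B).det = 1 := by
  have h : (A + e • B) * (A - e • B)ᵀ = 1 := by
    rw [transpose_sub, transpose_smul, Matrix.add_mul, Matrix.mul_sub, Matrix.mul_sub,
      Matrix.mul_smul, smul_mul, smul_mul, Matrix.mul_smul, smul_smul, he, hcomm, ← horth]
    simp only [neg_smul, one_smul]
    abel
  rw [← det_transpose (A - e • B), ← det_mul, h, det_one]

theorem det_mul_diagonal_ofReal_mul_conjTranspose (M : Matrix m m ℂ) (c : m → ℝ) :
    (M * diagonal (fun j => (c j : ℂ)) * Mᴴ).det = ((‖M.det‖ ^ 2 * ∏ j, c j : ℝ) : ℂ) := by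
  rw [det_mul, det_mul, det_conjTranspose, det_diagonal, mul_right_comm, Complex.star_def,
    Complex.mul_conj']
  push_cast
  rfl

theorem conjTranspose_map_ofReal_mul_self {k : Matrix m m ℝ} (hk : k * kᵀ = 1) :
    (k.map fun x => (x : ℂ))ᴴ * k.map (fun x => (x : ℂ)) = 1 := by
  have h := congrArg (·.map Complex.ofRealHom) (mul_eq_one_comm.mp hk)
  simp only [Matrix.map_mul,
    Matrix.map_one _ Complex.ofRealHom.map_zero Complex.ofRealHom.map_one] at h
  rw [← h]
  ext i j
  simp [mul_apply]

end Matrix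

def expWeights {ι : Type*} (v : ι → ℝ) : ι ⊕ ι → ℝ :=
  Sum.elim (fun j => Real.exp (v j)) (fun j => Real.exp (-v j))

theorem expDiag_eq_diagonal {n : ℕ} (v : Fin n → ℝ) :
    expDiag v = diagonal fun s => (expWeights v s : ℂ) := by
  rw [expDiag, fromBlocks_diagonal]
  congr 1
  ext (j | j) <;> rfl

theorem prod_expWeights_le {ι : Type*} [Fintype ι] (v : ι → ℝ) (S : Finset (ι ⊕ ι)) :
    ∏ s ∈ S, expWeights v s ≤ Real.exp (∑ j, |v j|) := by
  have hexp : ∏ s ∈ S, expWeights v s = Real.exp (∑ s ∈ S, Sum.elim v (-v) s) := by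
    rw [Real.exp_sum]
    exact prod_congr rfl fun s _ => by cases s <;> rfl
  rw [hexp, Real.exp_le_exp]
  calc ∑ s ∈ S, Sum.elim v (-v) s ≤ ∑ s ∈ S, (Sum.elim v (-v) s)⁺ :=
        sum_le_sum fun s _ => le_posPart _
    _ ≤ ∑ s, (Sum.elim v (-v) s)⁺ := sum_le_univ_sum_of_nonneg fun s => posPart_nonneg _
    _ = ∑ j, |v j| := by
        simp only [Fintype.sum_sum_type, Sum.elim_inl, Sum.elim_inr, ← sum_add_distrib]
        exact sum_congr rfl fun j _ => posPart_add_negPart (v j)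

theorem fromColsOneSmul_mul_expDiag_mul_conjTranspose {n : ℕ} {e : ℂ} (he : e * star e = 1)
    (v : Fin n → ℝ) :
    fromColsOneSmul (Fin n) e * expDiag v * (fromColsOneSmul (Fin n) e)ᴴ
      = diagonal fun j => ((2 * Real.cosh (v j) : ℝ) : ℂ) := by
  rw [expDiag, fromColsOneSmul_mul_fromBlocks_mul_conjTranspose, he, one_smul, diagonal_add]
  congr 1
  ext j
  push_cast
  rw [Complex.cosh]
  ring

theorem det_mul_expDiag_mul_conjTranspose_le {ι : Type*} [Fintype ι] [DecidableEq ι] {n : ℕ}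
    (Y : Matrix ι (Fin n ⊕ Fin n) ℂ) (v : Fin n → ℝ) :
    (Y * expDiag v * Yᴴ).det ≤ Real.exp (∑ j, |v j|) * (Y * Yᴴ).det := by
  rw [expDiag_eq_diagonal]
  exact det_mul_diagonal_mul_conjTranspose_le Y _ _ (prod_expWeights_le v)

theorem norm_det_sq_mul_prod_cosh_le {n : ℕ} {K u : Matrix (Fin n ⊕ Fin n) (Fin n ⊕ Fin n) ℂ}
    {A B : Matrix (Fin n) (Fin n) ℂ} {r ϱ : Fin n → ℝ} (hK : Kᴴ * K = 1) (hu : u * uᴴ = 1)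
    (heq : K * fromBlocks A B (-B) A * expDiag r * (K * fromBlocks A B (-B) A)ᴴ
      = u * expDiag ϱ * uᴴ)
    {e : ℂ} (he : e * e = -1) (he' : e * star e = 1) :
    ‖(A - e • B).det‖ ^ 2 * ∏ j, Real.cosh (r j) ≤ Real.exp (∑ j, |ϱ j|) := by
  let P := fromColsOneSmul (Fin n) e
  let Y := P * Kᴴ * u
  have hY : Y * Yᴴ = (2 : ℂ) • 1 := by
    calc Y * Yᴴ = P * (Kᴴ * (u * uᴴ) * K) * Pᴴ := by
          simp only [Y, conjTranspose_mul, conjTranspose_conjTranspose, Matrix.mul_assoc]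
      _ = (2 : ℂ) • 1 := by
          rw [hu, Matrix.mul_one, hK, Matrix.mul_one, fromColsOneSmul_mul_conjTranspose, he',
            one_add_one_eq_two]
  have hYϱ : Y * expDiag ϱ * Yᴴ
      = (A - e • B) * diagonal (fun j => ((2 * Real.cosh (r j) : ℝ) : ℂ)) * (A - e • B)ᴴ := by
    calc Y * expDiag ϱ * Yᴴ = P * (Kᴴ * (u * expDiag ϱ * uᴴ) * K) * Pᴴ := by
          simp only [Y, conjTranspose_mul, conjTranspose_conjTranspose, Matrix.mul_assoc]
      _ = (P * fromBlocks A B (-B) A) * expDiag r * (P * fromBlocks A B (-B) A)ᴴ := by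
          rw [← heq]
          simp only [conjTranspose_mul, ← Matrix.mul_assoc, hK, Matrix.one_mul]
          simp only [Matrix.mul_assoc, hK, Matrix.mul_one]
      _ = (A - e • B) * (P * expDiag r * Pᴴ) * (A - e • B)ᴴ := by
          rw [fromColsOneSmul_mul_fromBlocks he, conjTranspose_mul]
          simp only [P, Matrix.mul_assoc]
      _ = _ := by rw [fromColsOneSmul_mul_expDiag_mul_conjTranspose he']
  have key : ‖(A - e • B).det‖ ^ 2 * ∏ j, (2 * Real.cosh (r j))
      ≤ Real.exp (∑ j, |ϱ j|) * 2 ^ n := by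
    have h := det_mul_expDiag_mul_conjTranspose_le Y ϱ
    rw [hYϱ, hY, det_mul_diagonal_ofReal_mul_conjTranspose, det_smul, det_one, mul_one,
      Fintype.card_fin] at h
    exact_mod_cast h
  rw [prod_mul_distrib, prod_const, card_univ, Fintype.card_fin] at key
  nlinarith [pow_pos (two_pos : (0 : ℝ) < 2) n]

theorem le_div_of_sq_mul_le_of_mul_eq_one {a b c E : ℝ} (hab : a * b = 1) (hc : 0 < c)
    (ha : a ^ 2 * c ≤ E) (hb : b ^ 2 * c ≤ E) : a ≤ E / c := by
  have hmax : a ≤ max (a ^ 2) (b ^ 2) := by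
    rcases le_total a 1 with h | h
    · refine le_max_of_le_right ?_
      rcases le_or_gt a 0 with h0 | h0
      · nlinarith
      · have : 1 ≤ b := by nlinarith
        nlinarith
    · exact le_max_of_le_left (by nlinarith)
  rw [le_div_iff₀ hc]
  calc a * c ≤ max (a ^ 2) (b ^ 2) * c := by gcongr
    _ ≤ E := by rw [max_mul_of_nonneg _ _ hc.le]; exact max_le ha hb

theorem det_hermitian_part_bound_general (n : ℕ)
    (k : Matrix (Fin n ⊕ Fin n) (Fin n ⊕ Fin n) ℂ)
    (k₀ : Matrix (Fin n ⊕ Fin n) (Fin n ⊕ Fin n) ℝ)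
    (hk₀orth : k₀ * k₀ᵀ = 1)
    (A B : Matrix (Fin n) (Fin n) ℂ)
    (hdecomp : k = (k₀.map fun x => (x : ℂ)) * Matrix.fromBlocks A B (-B) A)
    (horth : A * Aᵀ + B * Bᵀ = 1)
    (hcomm : A * Bᵀ = B * Aᵀ)
    (hA : Aᴴ = A) (hB : Bᴴ = -B)
    (r ϱ : Fin n → ℝ)
    (u : Matrix (Fin n ⊕ Fin n) (Fin n ⊕ Fin n) ℂ)
    (huunit : u * uᴴ = 1)
    (heq : k * expDiag r * kᴴ = u * expDiag ϱ * uᴴ) :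
    ((A + Complex.I • B).det).im = 0 ∧
      ((A + Complex.I • B).det).re ≤
        Real.exp (∑ j, |ϱ j|) / ∏ j, Real.cosh (r j) := by
  subst hdecomp
  have hK := conjTranspose_map_ofReal_mul_self hk₀orth
  have hplus := norm_det_sq_mul_prod_cosh_le hK huunit heq (e := -Complex.I) (by simp) (by simp)
  rw [neg_smul, sub_neg_eq_add] at hplus
  have hminus := norm_det_sq_mul_prod_cosh_le hK huunit heq (e := Complex.I) (by simp) (by simp)
  have hherm : (A + Complex.I • B)ᴴ = A + Complex.I • B := by simp [hA, hB]
  have hunit := det_add_smul_mul_det_sub_smul Complex.I_mul_I horth hcomm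
  refine ⟨Complex.conj_eq_iff_im.mp ?_, ?_⟩
  · rw [← Complex.star_def, ← det_conjTranspose, hherm]
  · refine (Complex.re_le_norm _).trans (le_div_of_sq_mul_le_of_mul_eq_one ?_ ?_ hplus hminus)
    · rw [← norm_mul, hunit, norm_one]
    · exact prod_pos fun j _ => Real.cosh_pos (r j)

/-- **Bound on the determinant of the Hermitian part of a complex symplectic orthogonal
matrix.** If `k = k₀ k_h` is complex symplectic orthogonal with `k₀` real symplectic
orthogonal and `k_h = [[A,B],[−B,A]]` Hermitian orthogonal so that `h = A + iB` is
Hermitian, and if `k exp(r) conj(k)ᵀ = u exp(ϱ) conj(u)ᵀ` with `u` unitary symplectic and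
`r, ϱ` diagonal with `r_j ≥ 0`, then `det(h)` is real and
`det(h) ≤ exp(Σ_j |ϱ_j|) / Π_j cosh(r_j)`. -/
theorem det_hermitian_part_bound (n : ℕ) (hn : 1 ≤ n)
    (k : Matrix (Fin n ⊕ Fin n) (Fin n ⊕ Fin n) ℂ)
    (hksymp : kᵀ * JmatC n * k = JmatC n)
    (hkorth : k * kᵀ = 1)
    (k₀ : Matrix (Fin n ⊕ Fin n) (Fin n ⊕ Fin n) ℝ)
    (hk₀symp : k₀ᵀ * JmatR n * k₀ = JmatR n)
    (hk₀orth : k₀ * k₀ᵀ = 1)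
    (A B : Matrix (Fin n) (Fin n) ℂ)
    (hdecomp : k = (k₀.map fun x => (x : ℂ)) * Matrix.fromBlocks A B (-B) A)
    (horth : A * Aᵀ + B * Bᵀ = 1)
    (hcomm : A * Bᵀ = B * Aᵀ)
    (hA : Aᴴ = A) (hB : Bᴴ = -B)
    (r ϱ : Fin n → ℝ) (hr : ∀ j, 0 ≤ r j)
    (u : Matrix (Fin n ⊕ Fin n) (Fin n ⊕ Fin n) ℂ)
    (husymp : uᵀ * JmatC n * u = JmatC n)
    (huunit : u * uᴴ = 1)
    (heq : k * expDiag r * kᴴ = u * expDiag ϱ * uᴴ) :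
    ((A + Complex.I • B).det).im = 0 ∧
      ((A + Complex.I • B).det).re ≤
        Real.exp (∑ j, |ϱ j|) / ∏ j, Real.cosh (r j) :=
  det_hermitian_part_bound_general n k k₀ hk₀orth A B hdecomp horth hcomm hA hB r ϱ u huunit heq
end
end

section
/- Let N ≥ 1, let m ∈ ℂ^{N×N} be a Hermitian positive semidefinite matrix with eigenvalues (counted with multiplicity) ordered as λ_1 ≤ λ_2 ≤ … ≤ λ_N, let 1 ≤ r ≤ N, and let M be any r×r principal submatrix of m, obtained by deleting a set of N−r rows and the corresponding N−r columns. Then Π_{j=1}^r λ_j ≤ det(M) ≤ Π_{j=N−r+1}^N λ_j. In particular, if N = 2n and the eigenvalues of m are exp(ϱ_1), exp(−ϱ_1), …, exp(ϱ_n), exp(−ϱ_n) with ϱ_j ∈ ℝ, then every n×n principal submatrix M of m satisfies exp(−Σ_{j=1}^n |ϱ_j|) ≤ det(M) ≤ exp(Σ_{j=1}^n |ϱ_j|). -/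
/-!
Diagonalize `m = W D Wᴴ` with `W` unitary and `D` the diagonal of the sorted eigenvalues; a
principal submatrix is then `V D Vᴴ`, where the rows of `V` are orthonormal rows of `W`. By
Cauchy–Binet, `det (V D Vᴴ) = ∑_S |det V_S|² ∏_{k ∈ S} λ_k` over the `r`-element sets `S` of
columns, and the weights `|det V_S|²` sum to `det (V Vᴴ) = 1`. So `det M` is a convex combination
of products of `r` distinct eigenvalues, each of which lies between the product of the `r`
smallest and that of the `r` largest eigenvalues.
-/

open Matrix Finset
open scoped ComplexOrder

theorem Finset.sum_filter_injective_eq_sum_strictMono_perm {r : ℕ} {ι M : Type*} [LinearOrder ι]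
    [Fintype ι] [AddCommMonoid M] (f : (Fin r → ι) → M) :
    ∑ g ∈ univ.filter (fun g : Fin r → ι => Function.Injective g), f g =
      ∑ s ∈ univ.filter (fun s : Fin r → ι => StrictMono s),
        ∑ π : Equiv.Perm (Fin r), f (s ∘ π) := by
  rw [← sum_product']
  symm
  refine sum_nbij (fun p => p.1 ∘ p.2) ?_ ?_ ?_ (fun _ _ => rfl)
  · simp only [mem_product, mem_filter, mem_univ, true_and, and_true]
    exact fun p hp => hp.injective.comp p.2.injective
  · rintro ⟨s, π⟩ hs ⟨s', π'⟩ hs' h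
    simp only [coe_product, coe_filter, mem_univ, true_and, Set.mem_prod, Set.mem_ofPred_eq,
      coe_univ, Set.mem_univ, and_true] at hs hs' h
    have hss' : s = s' := (hs.range_inj hs').1 <| by
      rw [← π.surjective.range_comp, h, π'.surjective.range_comp]
    subst hss'
    exact Prod.ext rfl (Equiv.ext fun x => hs.injective (congrFun h x))
  · intro g hg
    simp only [coe_filter, mem_univ, true_and, Set.mem_ofPred_eq] at hg
    refine ⟨(g ∘ Tuple.sort g, (Tuple.sort g)⁻¹), ?_, ?_⟩
    · simpa using (Tuple.monotone_sort g).strictMono_of_injective (hg.comp (Equiv.injective _))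
    · funext x; simp

theorem Matrix.det_mul_eq_sum_det_submatrix_mul_prod {r : ℕ} {ι R : Type*} [Fintype ι]
    [CommRing R] (A : Matrix (Fin r) ι R) (B : Matrix ι (Fin r) R) :
    (A * B).det = ∑ g : Fin r → ι, (A.submatrix id g).det * ∏ i, B (g i) i := by
  classical
  have hrows : (A * B)ᵀ = fun i => ∑ k, B k i • Aᵀ k := by
    ext i j; simp [mul_apply, Finset.sum_apply, mul_comm]
  rw [← det_transpose, hrows]
  change detRowAlternating.toMultilinearMap _ = _
  rw [MultilinearMap.map_sum]
  refine sum_congr rfl fun g _ => ?_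
  rw [MultilinearMap.map_smul_univ, smul_eq_mul, mul_comm, ← det_transpose (A.submatrix id g)]
  rfl

theorem Matrix.det_mul_eq_sum_det_submatrix_mul_det_submatrix {r : ℕ} {ι R : Type*}
    [LinearOrder ι] [Fintype ι] [CommRing R] (A : Matrix (Fin r) ι R) (B : Matrix ι (Fin r) R) :
    (A * B).det = ∑ s ∈ univ.filter (fun s : Fin r → ι => StrictMono s),
      (A.submatrix id s).det * (B.submatrix s id).det := by
  have hinj : ∀ g : Fin r → ι, (A.submatrix id g).det * ∏ i, B (g i) i ≠ 0 →
      Function.Injective g := by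
    intro g hg
    by_contra hg'
    simp only [Function.Injective, not_forall] at hg'
    obtain ⟨i, j, hij, hne⟩ := hg'
    exact hg (by rw [det_zero_of_column_eq hne fun k => by simp [hij], zero_mul])
  rw [det_mul_eq_sum_det_submatrix_mul_prod, ← sum_filter_of_ne fun g _ => hinj g,
    sum_filter_injective_eq_sum_strictMono_perm]
  refine sum_congr rfl fun s _ => ?_
  rw [det_apply' (B.submatrix s id), mul_sum]
  refine sum_congr rfl fun π _ => ?_
  rw [show A.submatrix id (s ∘ π) = (A.submatrix id s).submatrix id π from rfl, det_permute']
  simp only [submatrix_apply, id_eq, Function.comp_apply]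
  ring

theorem Matrix.det_mul_diagonal_mul_conjTranspose_s7 {r : ℕ} {ι R : Type*} [LinearOrder ι]
    [Fintype ι] [CommRing R] [StarRing R] (V : Matrix (Fin r) ι R) (d : ι → R) :
    (V * diagonal d * Vᴴ).det = ∑ s ∈ univ.filter (fun s : Fin r → ι => StrictMono s),
      (∏ j, d (s j)) * ((V.submatrix id s).det * star (V.submatrix id s).det) := by
  rw [det_mul_eq_sum_det_submatrix_mul_det_submatrix]
  refine sum_congr rfl fun s _ => ?_
  have hdiag : (V * diagonal d).submatrix id s = V.submatrix id s * diagonal (d ∘ s) := by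
    ext i j; simp [mul_diagonal]
  rw [hdiag, ← conjTranspose_submatrix, det_mul, det_diagonal, det_conjTranspose]
  simp only [Function.comp_apply]
  ring

theorem Fin.val_le_val_of_strictMono {r N : ℕ} {t : Fin r → Fin N} (ht : StrictMono t)
    (j : Fin r) : (j : ℕ) ≤ t j := by
  simpa using card_le_card_of_injOn t (s := Iic j) (t := Iic (t j))
    (fun i hi => by simpa using ht.monotone (mem_Iic.1 hi)) ht.injective.injOn

theorem Fin.val_add_le_of_strictMono {r N : ℕ} {t : Fin r → Fin N} (ht : StrictMono t)
    (j : Fin r) : (t j : ℕ) + (r - j) ≤ N := by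
  have := card_le_card_of_injOn t (s := Ici j) (t := Ici (t j))
    (fun i hi => by simpa using ht.monotone (mem_Ici.1 hi)) ht.injective.injOn
  simp only [Fin.card_Ici] at this
  omega

theorem Monotone.prod_comp_strictMono_mem_Icc {r N : ℕ} (hrN : r ≤ N) {lam : Fin N → ℝ}
    (hmono : Monotone lam) (hnn : ∀ i, 0 ≤ lam i) {s : Fin r → Fin N} (hs : StrictMono s) :
    ∏ j, lam (s j) ∈ Set.Icc (∏ j : Fin r, lam (Fin.castLE hrN j))
      (∏ j : Fin r, lam ⟨N - r + (j : ℕ), by have := j.isLt; omega⟩) := by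
  refine ⟨prod_le_prod (fun j _ => hnn _) fun j _ => hmono ?_,
    prod_le_prod (fun j _ => hnn _) fun j _ => hmono ?_⟩
  · simpa [Fin.le_def] using Fin.val_le_val_of_strictMono hs j
  · have := Fin.val_add_le_of_strictMono hs j
    have := j.isLt
    simp only [Fin.le_def]
    omega

theorem Matrix.IsHermitian.exists_mul_diagonal_mul_conjTranspose {𝕜 n : Type*} [RCLike 𝕜]
    [Fintype n] [DecidableEq n] {m : Matrix n n 𝕜} (hm : m.IsHermitian) {lam : n → ℝ}
    (σ : Equiv.Perm n) (hσ : ∀ i, lam i = hm.eigenvalues (σ i)) :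
    ∃ W : Matrix n n 𝕜, W * Wᴴ = 1 ∧ m = W * diagonal (fun i => (lam i : 𝕜)) * Wᴴ := by
  set U : Matrix n n 𝕜 := (hm.eigenvectorUnitary : Matrix n n 𝕜)
  have hdiag : diagonal (fun i => (lam i : 𝕜)) =
      (diagonal (RCLike.ofReal ∘ hm.eigenvalues)).submatrix σ σ := by
    rw [submatrix_diagonal_equiv]; congr 1; ext i; simp [hσ]
  refine ⟨U.submatrix id σ, ?_, ?_⟩
  · rw [conjTranspose_submatrix, submatrix_mul_equiv, submatrix_id_id, ← star_eq_conjTranspose]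
    exact Unitary.mul_star_self_of_mem hm.eigenvectorUnitary.2
  · rw [hdiag, conjTranspose_submatrix, submatrix_mul_equiv, submatrix_mul_equiv,
      submatrix_id_id, ← star_eq_conjTranspose]
    conv_lhs => rw [hm.spectral_theorem, Unitary.conjStarAlgAut_apply]

theorem Matrix.det_mul_diagonal_ofReal_mul_conjTranspose_s7 {r : ℕ} {ι : Type*} [LinearOrder ι]
    [Fintype ι] (V : Matrix (Fin r) ι ℂ) (d : ι → ℝ) :
    (V * diagonal (fun i => (d i : ℂ)) * Vᴴ).det =
      ((∑ s ∈ univ.filter (fun s : Fin r → ι => StrictMono s),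
        Complex.normSq (V.submatrix id s).det * ∏ j, d (s j) : ℝ) : ℂ) := by
  rw [det_mul_diagonal_mul_conjTranspose_s7]
  push_cast
  simp only [Complex.star_def, Complex.mul_conj, mul_comm]

theorem Matrix.sum_normSq_det_submatrix_eq_one {r : ℕ} {ι : Type*} [LinearOrder ι]
    [Fintype ι] {V : Matrix (Fin r) ι ℂ} (hV : V * Vᴴ = 1) :
    ∑ s ∈ univ.filter (fun s : Fin r → ι => StrictMono s),
      Complex.normSq (V.submatrix id s).det = 1 := by
  have h := det_mul_diagonal_ofReal_mul_conjTranspose_s7 V 1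
  simp only [Pi.one_apply, Complex.ofReal_one, prod_const_one, mul_one, diagonal_one,
    Matrix.mul_one, hV, det_one] at h
  exact_mod_cast h.symm

theorem Matrix.det_mul_diagonal_mul_conjTranspose_bounds {r N : ℕ} (hrN : r ≤ N)
    {V : Matrix (Fin r) (Fin N) ℂ} (hV : V * Vᴴ = 1) {lam : Fin N → ℝ} (hmono : Monotone lam)
    (hnn : ∀ i, 0 ≤ lam i) :
    (V * diagonal (fun i => (lam i : ℂ)) * Vᴴ).det.im = 0 ∧
      (∏ j : Fin r, lam (Fin.castLE hrN j)) ≤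
        (V * diagonal (fun i => (lam i : ℂ)) * Vᴴ).det.re ∧
      (V * diagonal (fun i => (lam i : ℂ)) * Vᴴ).det.re ≤
        ∏ j : Fin r, lam ⟨N - r + (j : ℕ), by have := j.isLt; omega⟩ := by
  rw [det_mul_diagonal_ofReal_mul_conjTranspose_s7, Complex.ofReal_im, Complex.ofReal_re]
  exact ⟨rfl, (convex_Icc _ _).sum_mem (fun s _ => Complex.normSq_nonneg _)
    (sum_normSq_det_submatrix_eq_one hV) fun s hs =>
      hmono.prod_comp_strictMono_mem_Icc hrN hnn (mem_filter.1 hs).2⟩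

/-- **Determinant bounds for principal submatrices of a positive semidefinite Hermitian
matrix.** Let `m` be an `N × N` Hermitian positive semidefinite matrix with eigenvalues
(counted with multiplicity) `λ_1 ≤ λ_2 ≤ … ≤ λ_N`, and let `M = m.submatrix e e` be an
`r × r` principal submatrix of `m` (obtained by deleting `N − r` rows and the
corresponding columns, i.e. by selecting the rows and columns indexed by an injective
`e : Fin r → Fin N`). Then `det M` is real and
`Π_{j=1}^r λ_j ≤ det M ≤ Π_{j=N−r+1}^N λ_j`. -/
theorem det_principal_submatrix_bounds (N r : ℕ) (hrN : r ≤ N)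
    (m : Matrix (Fin N) (Fin N) ℂ) (hm : m.PosSemidef)
    (lam : Fin N → ℝ) (hmono : Monotone lam)
    (hlam : ∃ σ : Equiv.Perm (Fin N), ∀ i, lam i = hm.1.eigenvalues (σ i))
    (e : Fin r → Fin N) (he : Function.Injective e) :
    ((m.submatrix e e).det).im = 0 ∧
      (∏ j : Fin r, lam (Fin.castLE hrN j)) ≤ ((m.submatrix e e).det).re ∧
      ((m.submatrix e e).det).re ≤
        ∏ j : Fin r, lam ⟨N - r + (j : ℕ), by have := j.isLt; omega⟩ := by
  obtain ⟨σ, hσ⟩ := hlam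
  obtain ⟨W, hW, hmW⟩ := hm.1.exists_mul_diagonal_mul_conjTranspose σ hσ
  have hV : W.submatrix e id * (W.submatrix e id)ᴴ = 1 := by
    rw [conjTranspose_submatrix, ← submatrix_mul _ _ e id e Function.bijective_id, hW,
      submatrix_one e he]
  have hsub : m.submatrix e e =
      W.submatrix e id * diagonal (fun i => (lam i : ℂ)) * (W.submatrix e id)ᴴ := by
    rw [hmW, conjTranspose_submatrix, submatrix_mul _ _ e id e Function.bijective_id,
      submatrix_mul _ _ e id id Function.bijective_id, submatrix_id_id]
    -- the sides differ only in the path to the `Star ℂ` instance (`RCLike` vs `Complex`)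
    rfl
  rw [hsub]
  exact det_mul_diagonal_mul_conjTranspose_bounds hrN hV hmono fun i =>
    hσ i ▸ hm.eigenvalues_nonneg (σ i)
end

section
/- Let n ≥ 1 and let A, B ∈ ℂ^{n×n} satisfy AAᵗ + BBᵗ = 1_n, ABᵗ = BAᵗ, conj(A)ᵗ = A, and conj(B)ᵗ = −B, so that k_h = [[A, B],[−B, A]] ∈ ℂ^{2n×2n} is a Hermitian symplectic orthogonal matrix and h := A + iB is Hermitian. Then h is invertible with A − iB = h^{−t} = conj(h)^{−1}, det(h) is a nonzero real number, and the 2n×2n real matrices Re(k_h), Im(k_h) (entrywise real and imaginary parts) satisfy det(Re(k_h) + Im(k_h)·J_n) = det(h)² and det(Re(k_h) − Im(k_h)·J_n) = det(h)^{−2}. -/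
open Matrix

noncomputable section

/-- Entrywise real part of a complex matrix. -/
def reM {ι : Type*} (M : Matrix ι ι ℂ) : Matrix ι ι ℝ :=
  Matrix.of fun i j => (M i j).re

/-- Entrywise imaginary part of a complex matrix. -/
def imM {ι : Type*} (M : Matrix ι ι ℂ) : Matrix ι ι ℝ :=
  Matrix.of fun i j => (M i j).im

private lemma det_fromBlocks_skew {m : Type*} [Fintype m] [DecidableEq m]
    (P Q : Matrix m m ℂ) :
    (Matrix.fromBlocks P Q (-Q) P).det =
      (P - Complex.I • Q).det * (P + Complex.I • Q).det := by
  have key : (Matrix.fromBlocks (1 : Matrix m m ℂ) (Complex.I • 1) 0 1) *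
      Matrix.fromBlocks P Q (-Q) P *
      Matrix.fromBlocks (1 : Matrix m m ℂ) (-(Complex.I • 1)) 0 1 =
      Matrix.fromBlocks (P - Complex.I • Q) 0 (-Q) (P + Complex.I • Q) := by
    simp [Matrix.fromBlocks_multiply, Matrix.smul_mul, Matrix.mul_smul, smul_smul,
      Complex.I_mul_I, sub_eq_add_neg]
    constructor
    · module
    · module
  have := congrArg Matrix.det key
  rwa [det_mul, det_mul, det_fromBlocks_zero₂₁, det_fromBlocks_zero₂₁, det_one, one_mul,
    mul_one, one_mul, det_fromBlocks_zero₁₂] at this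

private lemma sub_smul_eq_map_conj {m : Type*} (X Y : Matrix m m ℝ) :
    (X.map (algebraMap ℝ ℂ) - Complex.I • Y.map (algebraMap ℝ ℂ)) =
    (X.map (algebraMap ℝ ℂ) + Complex.I • Y.map (algebraMap ℝ ℂ)).map (starRingEnd ℂ) := by
  ext i j
  simp [Complex.ext_iff]

/-- **The weight-factor determinant identity for Hermitian symplectic orthogonal
matrices.** If `A, B ∈ ℂ^{n×n}` satisfy `AAᵀ + BBᵀ = 1`, `ABᵀ = BAᵀ`, `Aᴴ = A`,
`Bᴴ = −B`, so that `k_h = [[A,B],[−B,A]]` is Hermitian symplectic orthogonal and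
`h = A + iB` is Hermitian, then `h` is invertible with
`A − iB = (hᵀ)⁻¹ = conj(h)⁻¹`, `det h` is a nonzero real number, and
`det(Re k_h + Im k_h · J_n) = (det h)²`, `det(Re k_h − Im k_h · J_n) = (det h)^{−2}`. -/
theorem hermitian_symplectic_weight_factor (n : ℕ) (hn : 1 ≤ n)
    (A B : Matrix (Fin n) (Fin n) ℂ)
    (horth : A * Aᵀ + B * Bᵀ = 1)
    (hcomm : A * Bᵀ = B * Aᵀ)
    (hA : Aᴴ = A) (hB : Bᴴ = -B) :
    IsUnit (A + Complex.I • B) ∧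
      A - Complex.I • B = ((A + Complex.I • B)ᵀ)⁻¹ ∧
      A - Complex.I • B = ((A + Complex.I • B).map (starRingEnd ℂ))⁻¹ ∧
      ((A + Complex.I • B).det).im = 0 ∧
      (A + Complex.I • B).det ≠ 0 ∧
      (reM (Matrix.fromBlocks A B (-B) A) +
          imM (Matrix.fromBlocks A B (-B) A) * JmatR n).det =
        ((A + Complex.I • B).det).re ^ 2 ∧
      (reM (Matrix.fromBlocks A B (-B) A) -
          imM (Matrix.fromBlocks A B (-B) A) * JmatR n).det =
        ((A + Complex.I • B).det).re ^ (-2 : ℤ) := by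
  -- basic algebraic identities
  have h1 : (A + Complex.I • B) * (A - Complex.I • B)ᵀ = 1 := by
    have expand : (A + Complex.I • B) * (A - Complex.I • B)ᵀ =
        A * Aᵀ + B * Bᵀ + (Complex.I • (B * Aᵀ) - Complex.I • (A * Bᵀ)) := by
      rw [transpose_sub, transpose_smul, Matrix.add_mul, Matrix.mul_sub, Matrix.mul_sub,
        Matrix.smul_mul, Matrix.mul_smul, Matrix.mul_smul, Matrix.smul_mul, smul_smul,
        Complex.I_mul_I, neg_one_smul]
      module
    rw [expand, hcomm, sub_self, add_zero, horth]
  have h2 : (A - Complex.I • B) * (A + Complex.I • B)ᵀ = 1 := by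
    have := congrArg Matrix.transpose h1
    rwa [transpose_mul, transpose_transpose, transpose_one] at this
  have hdet : (A + Complex.I • B).det * (A - Complex.I • B).det = 1 := by
    have := congrArg Matrix.det h1
    rwa [det_mul, det_transpose, det_one] at this
  have hunit : IsUnit (A + Complex.I • B) := by
    rw [Matrix.isUnit_iff_isUnit_det]
    exact IsUnit.of_mul_eq_one _ hdet
  have claim2 : A - Complex.I • B = ((A + Complex.I • B)ᵀ)⁻¹ :=
    (Matrix.inv_eq_left_inv h2).symm
  have hconj : (A + Complex.I • B).map (starRingEnd ℂ) = (A + Complex.I • B)ᵀ := by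
    ext i j
    have e1 := congrFun (congrFun hA j) i
    have e2 := congrFun (congrFun hB j) i
    simp only [Matrix.conjTranspose_apply, Matrix.neg_apply, RCLike.star_def] at e1 e2
    simp only [Matrix.map_apply, Matrix.transpose_apply, Matrix.add_apply, Matrix.smul_apply,
      smul_eq_mul, map_add, _root_.map_mul, Complex.conj_I, e1, e2]
    ring
  have claim3 : A - Complex.I • B = ((A + Complex.I • B).map (starRingEnd ℂ))⁻¹ := by
    rw [hconj]; exact claim2
  -- det h is real and nonzero
  have hdconj : starRingEnd ℂ ((A + Complex.I • B).det) = (A + Complex.I • B).det := by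
    rw [RingHom.map_det, RingHom.mapMatrix_apply, hconj, det_transpose]
  have him : ((A + Complex.I • B).det).im = 0 := by
    have := Complex.conj_eq_iff_im.mp hdconj
    exact this
  have hne : (A + Complex.I • B).det ≠ 0 := left_ne_zero_of_mul_eq_one hdet
  set r : ℝ := ((A + Complex.I • B).det).re with hr
  have hdre : (A + Complex.I • B).det = (r : ℂ) := by
    rw [← Complex.re_add_im ((A + Complex.I • B).det), him]
    simp
    exact hr.symm
  have hrne : r ≠ 0 := by
    intro h0
    apply hne
    rw [hdre, h0, Complex.ofReal_zero]
  have hdetg : (A - Complex.I • B).det = ((r : ℂ))⁻¹ := by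
    rw [← hdre]
    exact eq_inv_of_mul_eq_one_right hdet
  -- block decompositions of the real matrices
  have hreK : reM (Matrix.fromBlocks A B (-B) A) =
      Matrix.fromBlocks (reM A) (reM B) (-(reM B)) (reM A) := by
    ext (i|i) (j|j) <;> simp [reM]
  have himK : imM (Matrix.fromBlocks A B (-B) A) =
      Matrix.fromBlocks (imM A) (imM B) (-(imM B)) (imM A) := by
    ext (i|i) (j|j) <;> simp [imM]
  have eplus : reM (Matrix.fromBlocks A B (-B) A) +
      imM (Matrix.fromBlocks A B (-B) A) * JmatR n =
      Matrix.fromBlocks (reM A - imM B) (reM B + imM A)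
        (-(reM B + imM A)) (reM A - imM B) := by
    rw [hreK, himK, JmatR, Matrix.fromBlocks_multiply]
    ext (i|i) (j|j) <;> simp [Matrix.fromBlocks] <;> ring
  have eminus : reM (Matrix.fromBlocks A B (-B) A) -
      imM (Matrix.fromBlocks A B (-B) A) * JmatR n =
      Matrix.fromBlocks (reM A + imM B) (reM B - imM A)
        (-(reM B - imM A)) (reM A + imM B) := by
    rw [hreK, himK, JmatR, Matrix.fromBlocks_multiply]
    ext (i|i) (j|j) <;> simp [Matrix.fromBlocks] <;> ring
  -- generic determinant evaluation of such real block matrices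
  have detblock : ∀ X Y : Matrix (Fin n) (Fin n) ℝ,
      (((Matrix.fromBlocks X Y (-Y) X).det : ℝ) : ℂ) =
      starRingEnd ℂ ((X.map (algebraMap ℝ ℂ) + Complex.I • Y.map (algebraMap ℝ ℂ)).det) *
        (X.map (algebraMap ℝ ℂ) + Complex.I • Y.map (algebraMap ℝ ℂ)).det := by
    intro X Y
    have hcast : (((Matrix.fromBlocks X Y (-Y) X).det : ℝ) : ℂ) =
        ((Matrix.fromBlocks X Y (-Y) X).map (algebraMap ℝ ℂ)).det :=
      RingHom.map_det (algebraMap ℝ ℂ) _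
    have hmap : (Matrix.fromBlocks X Y (-Y) X).map (algebraMap ℝ ℂ) =
        Matrix.fromBlocks (X.map (algebraMap ℝ ℂ)) (Y.map (algebraMap ℝ ℂ))
          (-(Y.map (algebraMap ℝ ℂ))) (X.map (algebraMap ℝ ℂ)) := by
      ext (i|i) (j|j) <;> simp
    rw [hcast, hmap, det_fromBlocks_skew, sub_smul_eq_map_conj,
      ← RingHom.mapMatrix_apply, ← RingHom.map_det]
  -- the plus case
  have plus_id : (reM A - imM B).map (algebraMap ℝ ℂ) +
      Complex.I • (reM B + imM A).map (algebraMap ℝ ℂ) = A + Complex.I • B := by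
    ext i j
    simp [reM, imM, Complex.ext_iff]
    first
      | (constructor <;> ring)
      | ring
  have minus_id : (reM A + imM B).map (algebraMap ℝ ℂ) +
      Complex.I • (reM B - imM A).map (algebraMap ℝ ℂ) =
      (A - Complex.I • B).map (starRingEnd ℂ) := by
    ext i j
    simp [reM, imM, Complex.ext_iff]
    first
      | (constructor <;> ring)
      | ring
  have detplus : (reM (Matrix.fromBlocks A B (-B) A) +
      imM (Matrix.fromBlocks A B (-B) A) * JmatR n).det = r ^ 2 := by
    have := detblock (reM A - imM B) (reM B + imM A)
    rw [plus_id, hdre] at this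
    rw [eplus]
    have h' : (((Matrix.fromBlocks (reM A - imM B) (reM B + imM A)
        (-(reM B + imM A)) (reM A - imM B)).det : ℝ) : ℂ) = ((r ^ 2 : ℝ) : ℂ) := by
      rw [this, Complex.conj_ofReal]
      push_cast
      ring
    exact_mod_cast h'
  have detminus : (reM (Matrix.fromBlocks A B (-B) A) -
      imM (Matrix.fromBlocks A B (-B) A) * JmatR n).det = r ^ (-2 : ℤ) := by
    have hmapdet : ((A - Complex.I • B).map (starRingEnd ℂ)).det =
        starRingEnd ℂ ((A - Complex.I • B).det) := by
      rw [← RingHom.mapMatrix_apply, ← RingHom.map_det]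
    have := detblock (reM A + imM B) (reM B - imM A)
    rw [minus_id, hmapdet, hdetg] at this
    rw [eminus]
    have hfin : (((Matrix.fromBlocks (reM A + imM B) (reM B - imM A)
        (-(reM B - imM A)) (reM A + imM B)).det : ℝ) : ℂ) = ((r ^ (-2 : ℤ) : ℝ) : ℂ) := by
      rw [this, Complex.ofReal_zpow, _root_.zpow_neg, zpow_two, mul_inv, starRingEnd_self_apply,
        map_inv₀, Complex.conj_ofReal]
    exact_mod_cast hfin
  exact ⟨hunit, claim2, claim3, him, hne, detplus, detminus⟩
end
end

section
/- Let n ≥ 1 and for real κ and t > 0 define H_n(κ, t) = ∫_{ℝ^n} exp(−Σ_{j=1}^n ξ_j²) · Π_{j=1}^n (ξ_j + (κ−(n−j+1))√t/2)² · Π_{1≤l<m≤n} ((ξ_l − ξ_m) + ((l−m)/2)√t)² · Π_{1≤l<m≤n} ((ξ_l + ξ_m) + (κ − (n − (l+m)/2 + 1))√t)² dξ. Then there exists a constant c_n > 0, depending only on n, such that for every real κ ≥ n+1, ∫_0^∞ exp(−κt) · H_n(κ,t) dt ≤ c_n · κ^{n(n+1)/2 − 1}. -/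
open scoped BigOperators
open MeasureTheory Set Finset

set_option maxHeartbeats 1600000
noncomputable section

/-- The set of pairs `(l,m)` with `l < m`. -/
def offDiagPairs (n : ℕ) : Finset (Fin n × Fin n) :=
  Finset.univ.filter fun p => p.1 < p.2

lemma offDiagPairs_card_le (n : ℕ) : n + (offDiagPairs n).card ≤ n * (n + 1) / 2 := by
  classical
  have hswap : (Finset.univ.filter fun p : Fin n × Fin n => p.2 < p.1).card
      = (offDiagPairs n).card := by
    refine Finset.card_bij' (fun p _ => p.swap) (fun p _ => p.swap) ?_ ?_ ?_ ?_
    · intro p hp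
      simp only [offDiagPairs, Finset.mem_filter, Finset.mem_univ, true_and] at hp ⊢
      exact hp
    · intro p hp
      simp only [offDiagPairs, Finset.mem_filter, Finset.mem_univ, true_and] at hp ⊢
      exact hp
    · intro p _; exact Prod.swap_swap p
    · intro p _; exact Prod.swap_swap p
  have hdisj : Disjoint (offDiagPairs n)
      (Finset.univ.filter fun p : Fin n × Fin n => p.2 < p.1) := by
    rw [Finset.disjoint_left]
    intro p hp hp'
    simp only [offDiagPairs, Finset.mem_filter, Finset.mem_univ, true_and] at hp hp'
    exact absurd hp' (not_lt_of_gt hp)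
  have hunion : offDiagPairs n ∪ (Finset.univ.filter fun p : Fin n × Fin n => p.2 < p.1)
      = (Finset.univ : Finset (Fin n)).offDiag := by
    ext p
    simp only [offDiagPairs, Finset.mem_union, Finset.mem_filter, Finset.mem_univ, true_and,
      Finset.mem_offDiag]
    exact ⟨fun h => h.elim ne_of_lt ne_of_gt, fun h => lt_or_gt_of_ne h⟩
  have hcard : (offDiagPairs n).card * 2 = n * n - n := by
    have := Finset.card_union_of_disjoint hdisj
    rw [hunion, Finset.offDiag_card, hswap] at this
    simp only [Finset.card_univ, Fintype.card_fin] at this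
    omega
  have h1 : n ≤ n * n := by nlinarith
  have h2 : n * (n + 1) = n * n + n := by ring
  omega

lemma pair_le_sum {n : ℕ} (ξ : Fin n → ℝ) {l m : Fin n} (h : l ≠ m) :
    ξ l ^ 2 + ξ m ^ 2 ≤ ∑ j, ξ j ^ 2 := by
  classical
  have h1 : ∑ j ∈ ({l, m} : Finset (Fin n)), ξ j ^ 2 ≤ ∑ j, ξ j ^ 2 :=
    Finset.sum_le_sum_of_subset_of_nonneg (Finset.subset_univ _) fun i _ _ => sq_nonneg _
  rwa [Finset.sum_pair h] at h1

lemma gauss_moment_integrable (n p : ℕ) :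
    Integrable (fun ξ : Fin n → ℝ => Real.exp (-∑ j, ξ j ^ 2) * (∑ j, ξ j ^ 2) ^ p) := by
  have hg : Integrable (fun ξ : Fin n → ℝ => ∏ j : Fin n, Real.exp (-(1/2) * ξ j ^ 2)) :=
    Integrable.fintype_prod (f := fun _ : Fin n => fun x : ℝ => Real.exp (-(1/2) * x ^ 2))
      fun _ => integrable_exp_neg_mul_sq (by norm_num)
  have hc : Continuous fun ξ : Fin n → ℝ => ∑ j, ξ j ^ 2 :=
    continuous_finset_sum _ fun i _ => (continuous_apply i).pow 2
  refine Integrable.mono' (hg.const_mul ((Nat.factorial p : ℝ) * 2 ^ p)) ?_ (ae_of_all _ fun ξ => ?_)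
  · exact (hc.neg.rexp.mul (hc.pow p)).aestronglyMeasurable
  · set S := ∑ j, ξ j ^ 2 with hSdef
    have hS0 : 0 ≤ S := Finset.sum_nonneg fun _ _ => sq_nonneg _
    have hprod : ∏ j : Fin n, Real.exp (-(1/2) * ξ j ^ 2) = Real.exp (-(1/2) * S) := by
      rw [← Real.exp_sum]
      congr 1
      rw [hSdef, Finset.mul_sum]
    have hkey : Real.exp (-S) * S ^ p ≤ (Nat.factorial p : ℝ) * 2 ^ p * Real.exp (-(1/2) * S) := by
      have h1 : (S / 2) ^ p / (Nat.factorial p : ℝ) ≤ Real.exp (S / 2) :=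
        Real.pow_div_factorial_le_exp (x := S / 2) (by positivity) p
      have h2 : S ^ p ≤ (Nat.factorial p : ℝ) * 2 ^ p * Real.exp (S / 2) := by
        have hfac : (0:ℝ) < (Nat.factorial p : ℝ) := by positivity
        rw [div_le_iff₀ hfac] at h1
        have : (S / 2) ^ p = S ^ p / 2 ^ p := div_pow S 2 p
        rw [this] at h1
        have h2p : (0:ℝ) < 2 ^ p := by positivity
        calc S ^ p = S ^ p / 2 ^ p * 2 ^ p := by field_simp
          _ ≤ Real.exp (S / 2) * (Nat.factorial p : ℝ) * 2 ^ p := by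
              exact mul_le_mul_of_nonneg_right h1 h2p.le
          _ = (Nat.factorial p : ℝ) * 2 ^ p * Real.exp (S / 2) := by ring
      calc Real.exp (-S) * S ^ p
          ≤ Real.exp (-S) * ((Nat.factorial p : ℝ) * 2 ^ p * Real.exp (S / 2)) := by
            exact mul_le_mul_of_nonneg_left h2 (Real.exp_pos _).le
        _ = (Nat.factorial p : ℝ) * 2 ^ p * (Real.exp (-S) * Real.exp (S / 2)) := by ring
        _ = (Nat.factorial p : ℝ) * 2 ^ p * Real.exp (-(1/2) * S) := by
            rw [← Real.exp_add]; congr 1; ring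
    rw [Real.norm_eq_abs, abs_of_nonneg (by positivity), hprod]
    exact hkey

lemma integrableOn_exp_mul_pow {κ : ℝ} (hκ : 0 < κ) (q : ℕ) :
    IntegrableOn (fun t : ℝ => Real.exp (-κ * t) * t ^ q) (Set.Ioi 0) := by
  refine Integrable.mono'
      ((exp_neg_integrableOn_Ioi 0 (half_pos hκ)).const_mul ((Nat.factorial q : ℝ) * (2 / κ) ^ q)) ?_ ?_
  · exact (((continuous_const.mul continuous_id).rexp).mul
      (continuous_pow q)).aestronglyMeasurable.restrict
  · filter_upwards [ae_restrict_mem measurableSet_Ioi] with t ht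
    have ht0 : (0:ℝ) < t := ht
    have h1 : (κ * t / 2) ^ q ≤ (Nat.factorial q : ℝ) * Real.exp (κ * t / 2) := by
      have := Real.pow_div_factorial_le_exp (x := κ * t / 2) (by positivity) q
      rw [div_le_iff₀ (by positivity)] at this
      linarith [this]
    have h2 : t ^ q = (2 / κ) ^ q * (κ * t / 2) ^ q := by
      rw [← mul_pow]
      congr 1
      field_simp
    rw [Real.norm_eq_abs, abs_of_nonneg (by positivity)]
    calc Real.exp (-κ * t) * t ^ q
        = Real.exp (-κ * t) * ((2 / κ) ^ q * (κ * t / 2) ^ q) := by rw [← h2]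
      _ ≤ Real.exp (-κ * t) * ((2 / κ) ^ q * ((Nat.factorial q : ℝ) * Real.exp (κ * t / 2))) := by
          have : (0:ℝ) ≤ (2 / κ) ^ q := by positivity
          exact mul_le_mul_of_nonneg_left (mul_le_mul_of_nonneg_left h1 this) (Real.exp_pos _).le
      _ = (Nat.factorial q : ℝ) * (2 / κ) ^ q * (Real.exp (-κ * t) * Real.exp (κ * t / 2)) := by ring
      _ = (Nat.factorial q : ℝ) * (2 / κ) ^ q * Real.exp (-(κ / 2) * t) := by
          rw [← Real.exp_add]; congr 1; ring

lemma integral_exp_mul_pow {κ : ℝ} (hκ : 0 < κ) (q : ℕ) :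
    ∫ t in Set.Ioi (0:ℝ), Real.exp (-κ * t) * t ^ q = (Nat.factorial q : ℝ) / κ ^ (q + 1) := by
  have h := Real.integral_rpow_mul_exp_neg_mul_Ioi (a := (q : ℝ) + 1) (r := κ)
    (by positivity) hκ
  have hcong : ∀ t ∈ Set.Ioi (0:ℝ),
      Real.exp (-κ * t) * t ^ q = t ^ ((q : ℝ) + 1 - 1) * Real.exp (-(κ * t)) := by
    intro t ht
    rw [add_sub_cancel_right, Real.rpow_natCast, neg_mul]
    ring
  rw [setIntegral_congr_fun measurableSet_Ioi hcong, h, Real.Gamma_nat_eq_factorial,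
    show ((q : ℝ) + 1) = ((q + 1 : ℕ) : ℝ) by push_cast; ring, Real.rpow_natCast,
    one_div, inv_pow]
  ring

lemma pointwise_bound (n : ℕ) {κ t : ℝ} (hκ : (n : ℝ) + 1 ≤ κ) (ht : 0 < t) (ξ : Fin n → ℝ) :
    Real.exp (-∑ j, ξ j ^ 2) *
      (∏ j : Fin n, (ξ j + (κ - ((n : ℝ) - (j : ℕ))) * Real.sqrt t / 2) ^ 2) *
      (∏ p ∈ offDiagPairs n,
        ((ξ p.1 - ξ p.2) + (((p.1 : ℕ) : ℝ) - ((p.2 : ℕ) : ℝ)) / 2 * Real.sqrt t) ^ 2) *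
      (∏ p ∈ offDiagPairs n,
        ((ξ p.1 + ξ p.2) +
            (κ - ((n : ℝ) - (((p.1 : ℕ) : ℝ) + ((p.2 : ℕ) : ℝ)) / 2)) * Real.sqrt t) ^ 2)
    ≤ Real.exp (-∑ j, ξ j ^ 2) *
        (4 * (∑ j, ξ j ^ 2) + 2 * κ ^ 2 * t) ^ (n + (offDiagPairs n).card) *
        (4 * (∑ j, ξ j ^ 2) + 2 * (n : ℝ) ^ 2 * t) ^ (offDiagPairs n).card := by
  obtain ⟨S, hSdef⟩ : ∃ S : ℝ, S = ∑ j, ξ j ^ 2 := ⟨_, rfl⟩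
  rw [← hSdef]
  have hS0 : 0 ≤ S := hSdef ▸ Finset.sum_nonneg fun _ _ => sq_nonneg _
  have hκ0 : (0:ℝ) < κ := lt_of_lt_of_le (by positivity) hκ
  have hts : Real.sqrt t ^ 2 = t := Real.sq_sqrt ht.le
  have hQA : (0:ℝ) ≤ 4 * S + 2 * κ ^ 2 * t := by positivity
  have hQB : (0:ℝ) ≤ 4 * S + 2 * (n : ℝ) ^ 2 * t := by positivity
  have hκt : (0:ℝ) ≤ κ ^ 2 * t := mul_nonneg (sq_nonneg κ) ht.le
  have hnt : (0:ℝ) ≤ (n : ℝ) ^ 2 * t := mul_nonneg (sq_nonneg _) ht.le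
  have hsingle : ∀ j : Fin n, ξ j ^ 2 ≤ S := fun j => hSdef ▸
    Finset.single_le_sum (f := fun i => ξ i ^ 2) (fun i _ => sq_nonneg _) (Finset.mem_univ j)
  have hpair : ∀ p : Fin n × Fin n, p.1 < p.2 → ξ p.1 ^ 2 + ξ p.2 ^ 2 ≤ S := fun p hp =>
    hSdef ▸ pair_le_sum ξ (ne_of_lt hp)
  have h1 : (∏ j : Fin n, (ξ j + (κ - ((n : ℝ) - (j : ℕ))) * Real.sqrt t / 2) ^ 2)
      ≤ (4 * S + 2 * κ ^ 2 * t) ^ n := by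
    have hb : ∀ j : Fin n,
        (ξ j + (κ - ((n : ℝ) - (j : ℕ))) * Real.sqrt t / 2) ^ 2 ≤ 4 * S + 2 * κ ^ 2 * t := by
      intro j
      have hx : ξ j ^ 2 ≤ S := hsingle j
      have hjn : ((j : ℕ) : ℝ) < (n : ℝ) := by exact_mod_cast j.isLt
      have hj0 : (0:ℝ) ≤ ((j : ℕ) : ℝ) := Nat.cast_nonneg _
      obtain ⟨c, hc⟩ : ∃ c : ℝ, c = κ - ((n : ℝ) - (j : ℕ)) := ⟨_, rfl⟩
      rw [← hc]
      have hc0 : 0 ≤ c := by rw [hc]; linarith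
      have hcκ : c ≤ κ := by rw [hc]; linarith
      have hc2 : c ^ 2 ≤ κ ^ 2 := by nlinarith
      have hbsq : (c * Real.sqrt t / 2) ^ 2 = c ^ 2 * t / 4 := by
        rw [div_pow, mul_pow, hts]; norm_num
      nlinarith [sq_nonneg (ξ j - c * Real.sqrt t / 2), hbsq,
        mul_le_mul_of_nonneg_right hc2 ht.le, hx, hS0, hκt]
    calc (∏ j : Fin n, (ξ j + (κ - ((n : ℝ) - (j : ℕ))) * Real.sqrt t / 2) ^ 2)
        ≤ ∏ _j : Fin n, (4 * S + 2 * κ ^ 2 * t) :=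
          Finset.prod_le_prod (fun _ _ => sq_nonneg _) (fun j _ => hb j)
      _ = (4 * S + 2 * κ ^ 2 * t) ^ n := by
          rw [Finset.prod_const, Finset.card_univ, Fintype.card_fin]
  have h2 : (∏ p ∈ offDiagPairs n,
        ((ξ p.1 - ξ p.2) + (((p.1 : ℕ) : ℝ) - ((p.2 : ℕ) : ℝ)) / 2 * Real.sqrt t) ^ 2)
      ≤ (4 * S + 2 * (n : ℝ) ^ 2 * t) ^ (offDiagPairs n).card := by
    have hb : ∀ p ∈ offDiagPairs n,
        ((ξ p.1 - ξ p.2) + (((p.1 : ℕ) : ℝ) - ((p.2 : ℕ) : ℝ)) / 2 * Real.sqrt t) ^ 2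
          ≤ 4 * S + 2 * (n : ℝ) ^ 2 * t := by
      intro p hp
      have hplt : p.1 < p.2 := (Finset.mem_filter.mp hp).2
      have hxy : ξ p.1 ^ 2 + ξ p.2 ^ 2 ≤ S := hpair p hplt
      have h1' : ((p.1 : ℕ) : ℝ) < (n : ℝ) := by exact_mod_cast p.1.isLt
      have h2' : ((p.2 : ℕ) : ℝ) < (n : ℝ) := by exact_mod_cast p.2.isLt
      have h10 : (0:ℝ) ≤ ((p.1 : ℕ) : ℝ) := Nat.cast_nonneg _
      have h20 : (0:ℝ) ≤ ((p.2 : ℕ) : ℝ) := Nat.cast_nonneg _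
      obtain ⟨d, hd⟩ : ∃ d : ℝ, d = ((p.1 : ℕ) : ℝ) - ((p.2 : ℕ) : ℝ) := ⟨_, rfl⟩
      rw [← hd]
      have hd2 : d ^ 2 ≤ (n : ℝ) ^ 2 := by nlinarith
      have hbsq : (d / 2 * Real.sqrt t) ^ 2 = d ^ 2 * t / 4 := by
        rw [mul_pow, div_pow, hts]; ring
      nlinarith [sq_nonneg (ξ p.1 - ξ p.2 - d / 2 * Real.sqrt t), sq_nonneg (ξ p.1 + ξ p.2),
        hbsq, mul_le_mul_of_nonneg_right hd2 ht.le, hxy, hS0, hnt]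
    calc (∏ p ∈ offDiagPairs n,
          ((ξ p.1 - ξ p.2) + (((p.1 : ℕ) : ℝ) - ((p.2 : ℕ) : ℝ)) / 2 * Real.sqrt t) ^ 2)
        ≤ ∏ _p ∈ offDiagPairs n, (4 * S + 2 * (n : ℝ) ^ 2 * t) :=
          Finset.prod_le_prod (fun _ _ => sq_nonneg _) hb
      _ = (4 * S + 2 * (n : ℝ) ^ 2 * t) ^ (offDiagPairs n).card := Finset.prod_const _
  have h3 : (∏ p ∈ offDiagPairs n,
        ((ξ p.1 + ξ p.2) +
            (κ - ((n : ℝ) - (((p.1 : ℕ) : ℝ) + ((p.2 : ℕ) : ℝ)) / 2)) * Real.sqrt t) ^ 2)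
      ≤ (4 * S + 2 * κ ^ 2 * t) ^ (offDiagPairs n).card := by
    have hb : ∀ p ∈ offDiagPairs n,
        ((ξ p.1 + ξ p.2) +
            (κ - ((n : ℝ) - (((p.1 : ℕ) : ℝ) + ((p.2 : ℕ) : ℝ)) / 2)) * Real.sqrt t) ^ 2
          ≤ 4 * S + 2 * κ ^ 2 * t := by
      intro p hp
      have hplt : p.1 < p.2 := (Finset.mem_filter.mp hp).2
      have hxy : ξ p.1 ^ 2 + ξ p.2 ^ 2 ≤ S := hpair p hplt
      have h1' : ((p.1 : ℕ) : ℝ) < (n : ℝ) := by exact_mod_cast p.1.isLt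
      have h2' : ((p.2 : ℕ) : ℝ) < (n : ℝ) := by exact_mod_cast p.2.isLt
      have h10 : (0:ℝ) ≤ ((p.1 : ℕ) : ℝ) := Nat.cast_nonneg _
      have h20 : (0:ℝ) ≤ ((p.2 : ℕ) : ℝ) := Nat.cast_nonneg _
      obtain ⟨c, hc⟩ : ∃ c : ℝ,
          c = κ - ((n : ℝ) - (((p.1 : ℕ) : ℝ) + ((p.2 : ℕ) : ℝ)) / 2) := ⟨_, rfl⟩
      rw [← hc]
      have hc0 : 0 ≤ c := by rw [hc]; linarith
      have hcκ : c ≤ κ := by rw [hc]; linarith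
      have hc2 : c ^ 2 ≤ κ ^ 2 := by nlinarith
      have hbsq : (c * Real.sqrt t) ^ 2 = c ^ 2 * t := by rw [mul_pow, hts]
      nlinarith [sq_nonneg (ξ p.1 + ξ p.2 - c * Real.sqrt t), sq_nonneg (ξ p.1 - ξ p.2),
        hbsq, mul_le_mul_of_nonneg_right hc2 ht.le, hxy, hS0, hκt]
    calc (∏ p ∈ offDiagPairs n,
          ((ξ p.1 + ξ p.2) +
              (κ - ((n : ℝ) - (((p.1 : ℕ) : ℝ) + ((p.2 : ℕ) : ℝ)) / 2)) * Real.sqrt t) ^ 2)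
        ≤ ∏ _p ∈ offDiagPairs n, (4 * S + 2 * κ ^ 2 * t) :=
          Finset.prod_le_prod (fun _ _ => sq_nonneg _) hb
      _ = (4 * S + 2 * κ ^ 2 * t) ^ (offDiagPairs n).card := Finset.prod_const _
  have he : (0:ℝ) ≤ Real.exp (-S) := (Real.exp_pos _).le
  have hP2n : (0:ℝ) ≤ ∏ p ∈ offDiagPairs n,
      ((ξ p.1 - ξ p.2) + (((p.1 : ℕ) : ℝ) - ((p.2 : ℕ) : ℝ)) / 2 * Real.sqrt t) ^ 2 :=
    Finset.prod_nonneg fun _ _ => sq_nonneg _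
  have hP3n : (0:ℝ) ≤ ∏ p ∈ offDiagPairs n,
      ((ξ p.1 + ξ p.2) +
          (κ - ((n : ℝ) - (((p.1 : ℕ) : ℝ) + ((p.2 : ℕ) : ℝ)) / 2)) * Real.sqrt t) ^ 2 :=
    Finset.prod_nonneg fun _ _ => sq_nonneg _
  have step1 : Real.exp (-S) *
      (∏ j : Fin n, (ξ j + (κ - ((n : ℝ) - (j : ℕ))) * Real.sqrt t / 2) ^ 2) *
      (∏ p ∈ offDiagPairs n,
        ((ξ p.1 - ξ p.2) + (((p.1 : ℕ) : ℝ) - ((p.2 : ℕ) : ℝ)) / 2 * Real.sqrt t) ^ 2) *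
      (∏ p ∈ offDiagPairs n,
        ((ξ p.1 + ξ p.2) +
            (κ - ((n : ℝ) - (((p.1 : ℕ) : ℝ) + ((p.2 : ℕ) : ℝ)) / 2)) * Real.sqrt t) ^ 2)
      ≤ Real.exp (-S) * (4 * S + 2 * κ ^ 2 * t) ^ n *
          (4 * S + 2 * (n : ℝ) ^ 2 * t) ^ (offDiagPairs n).card *
          (4 * S + 2 * κ ^ 2 * t) ^ (offDiagPairs n).card :=
    mul_le_mul (mul_le_mul (mul_le_mul_of_nonneg_left h1 he) h2 hP2n
        (mul_nonneg he (pow_nonneg hQA n))) h3 hP3n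
      (mul_nonneg (mul_nonneg he (pow_nonneg hQA n)) (pow_nonneg hQB _))
  refine step1.trans_eq ?_
  rw [pow_add]; ring

/-- The Gaussian integral
`H_n(κ,t) = ∫_{ℝ^n} e^{−Σ ξ_j²} Π_j (ξ_j + (κ−(n−j+1))√t/2)²
  · Π_{l<m} ((ξ_l−ξ_m) + ((l−m)/2)√t)²
  · Π_{l<m} ((ξ_l+ξ_m) + (κ−(n−(l+m)/2+1))√t)² dξ`
(indices `j, l, m` run over `1, …, n`; below they are 0-based, so `n−j+1` becomes
`n−j`, `l−m` stays `l−m`, and `n−(l+m)/2` stays as written). -/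
def Hfun (n : ℕ) (κ t : ℝ) : ℝ :=
  ∫ ξ : Fin n → ℝ,
    Real.exp (-∑ j, ξ j ^ 2) *
      (∏ j : Fin n, (ξ j + (κ - ((n : ℝ) - (j : ℕ))) * Real.sqrt t / 2) ^ 2) *
      (∏ p ∈ offDiagPairs n,
        ((ξ p.1 - ξ p.2) + (((p.1 : ℕ) : ℝ) - ((p.2 : ℕ) : ℝ)) / 2 * Real.sqrt t) ^ 2) *
      ∏ p ∈ offDiagPairs n,
        ((ξ p.1 + ξ p.2) +
            (κ - ((n : ℝ) - (((p.1 : ℕ) : ℝ) + ((p.2 : ℕ) : ℝ)) / 2)) * Real.sqrt t) ^ 2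

/-- **The heat-kernel Gaussian integral bound.** There is a constant `c_n > 0`,
depending only on `n`, such that for every real `κ ≥ n+1`,
`∫_0^∞ e^{−κt} H_n(κ,t) dt ≤ c_n κ^{n(n+1)/2 − 1}`. -/
theorem heat_kernel_gaussian_integral_bound (n : ℕ) (hn : 1 ≤ n) :
    ∃ c : ℝ, 0 < c ∧
      ∀ κ : ℝ, (n : ℝ) + 1 ≤ κ →
        ∫ t in Set.Ioi (0 : ℝ), Real.exp (-κ * t) * Hfun n κ t ≤
          c * κ ^ (((n : ℝ) * ((n : ℝ) + 1)) / 2 - 1) := by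
  classical
  obtain ⟨K, hKdef⟩ : ∃ K, K = (offDiagPairs n).card := ⟨_, rfl⟩
  obtain ⟨M', hM'def⟩ : ∃ M', M' = n + K := ⟨_, rfl⟩
  obtain ⟨M, hMdef⟩ : ∃ M, M = n * (n + 1) / 2 := ⟨_, rfl⟩
  have hM'M : M' ≤ M := by rw [hM'def, hMdef, hKdef]; exact offDiagPairs_card_le n
  have hM1 : 1 ≤ M := by
    rw [hMdef]
    have h2 : 2 ≤ n * (n + 1) := by nlinarith
    omega
  obtain ⟨m, hmdef⟩ : ∃ m : ℕ → ℝ, m = fun p =>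
      ∫ ξ : Fin n → ℝ, Real.exp (-∑ j, ξ j ^ 2) * (∑ j, ξ j ^ 2) ^ p := ⟨_, rfl⟩
  have hm0 : ∀ p, 0 ≤ m p := by
    intro p
    rw [hmdef]
    exact integral_nonneg fun ξ => by positivity
  obtain ⟨D, hDdef⟩ : ∃ D : ℕ → ℕ → ℝ, D = fun i j =>
      (Nat.choose M' i : ℝ) * (Nat.choose K j : ℝ) * 4 ^ (i + j) * m (i + j) *
        2 ^ (M' - i) * 2 ^ (K - j) * (n : ℝ) ^ (2 * (K - j)) := ⟨_, rfl⟩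
  have hD0 : ∀ i j, 0 ≤ D i j := by
    intro i j
    have h := hm0 (i + j)
    rw [hDdef]
    positivity
  refine ⟨(∑ i ∈ Finset.range (M' + 1), ∑ j ∈ Finset.range (K + 1),
      D i j * (Nat.factorial ((M' - i) + (K - j)) : ℝ)) + 1, ?_, ?_⟩
  · have h : 0 ≤ ∑ i ∈ Finset.range (M' + 1), ∑ j ∈ Finset.range (K + 1),
        D i j * (Nat.factorial ((M' - i) + (K - j)) : ℝ) :=
      Finset.sum_nonneg fun i _ => Finset.sum_nonneg fun j _ =>
        mul_nonneg (hD0 i j) (Nat.cast_nonneg _)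
    linarith
  · intro κ hκ
    have hκ0 : (0:ℝ) < κ := lt_of_lt_of_le (by positivity) hκ
    have hκ1 : (1:ℝ) ≤ κ := by
      have h0 : (0:ℝ) ≤ (n : ℝ) := Nat.cast_nonneg n
      linarith
    -- rewrite the real exponent as a natural power
    have hrpow : κ ^ (((n : ℝ) * ((n : ℝ) + 1)) / 2 - 1) = κ ^ (M - 1) := by
      have h2M : M * 2 = n * (n + 1) := by
        rw [hMdef]
        exact Nat.div_mul_cancel (even_iff_two_dvd.mp (Nat.even_mul_succ_self n))
      have hcast : ((n : ℝ) * ((n : ℝ) + 1)) / 2 - 1 = ((M - 1 : ℕ) : ℝ) := by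
        have hc := congrArg (fun k : ℕ => (k : ℝ)) h2M
        push_cast at hc
        push_cast [Nat.cast_sub hM1]
        linarith
      rw [hcast, Real.rpow_natCast]
    rw [hrpow]
    -- pointwise bound on Hfun for t > 0
    have hH : ∀ t : ℝ, 0 < t → Hfun n κ t ≤
        ∑ i ∈ Finset.range (M' + 1), ∑ j ∈ Finset.range (K + 1),
          D i j * (κ ^ (2 * (M' - i)) * t ^ ((M' - i) + (K - j))) := by
      intro t ht
      have hgint : Integrable (fun ξ : Fin n → ℝ =>
          ∑ i ∈ Finset.range (M' + 1), ∑ j ∈ Finset.range (K + 1),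
            ((Nat.choose M' i : ℝ) * (Nat.choose K j : ℝ) * (2 * κ ^ 2 * t) ^ (M' - i) *
                (2 * (n : ℝ) ^ 2 * t) ^ (K - j) * 4 ^ (i + j)) *
              (Real.exp (-∑ l, ξ l ^ 2) * (∑ l, ξ l ^ 2) ^ (i + j))) := by
        refine integrable_finset_sum _ fun i _ => integrable_finset_sum _ fun j _ => ?_
        exact (gauss_moment_integrable n (i + j)).const_mul _
      have hle : Hfun n κ t ≤ ∫ ξ : Fin n → ℝ,
          ∑ i ∈ Finset.range (M' + 1), ∑ j ∈ Finset.range (K + 1),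
            ((Nat.choose M' i : ℝ) * (Nat.choose K j : ℝ) * (2 * κ ^ 2 * t) ^ (M' - i) *
                (2 * (n : ℝ) ^ 2 * t) ^ (K - j) * 4 ^ (i + j)) *
              (Real.exp (-∑ l, ξ l ^ 2) * (∑ l, ξ l ^ 2) ^ (i + j)) := by
        unfold Hfun
        refine integral_mono_of_nonneg (ae_of_all _ fun ξ => ?_) hgint (ae_of_all _ fun ξ => ?_)
        · exact mul_nonneg (mul_nonneg (mul_nonneg (Real.exp_pos _).le
            (Finset.prod_nonneg fun _ _ => sq_nonneg _))
            (Finset.prod_nonneg fun _ _ => sq_nonneg _))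
            (Finset.prod_nonneg fun _ _ => sq_nonneg _)
        · refine le_trans (pointwise_bound n hκ ht ξ) (le_of_eq ?_)
          beta_reduce
          rw [← hKdef, ← hM'def]
          rw [add_pow, add_pow]
          simp only [Finset.mul_sum, Finset.sum_mul]
          rw [Finset.sum_comm]
          refine Finset.sum_congr rfl fun i _ => ?_
          refine Finset.sum_congr rfl fun j _ => ?_
          simp only [← Finset.mul_sum]
          rw [mul_pow 4 _ i, mul_pow 4 _ j]
          ring
      refine hle.trans (le_of_eq ?_)
      rw [integral_finset_sum _ fun i _ => integrable_finset_sum _ fun j _ =>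
        (gauss_moment_integrable n (i + j)).const_mul _]
      refine Finset.sum_congr rfl fun i _ => ?_
      rw [integral_finset_sum _ fun j _ => (gauss_moment_integrable n (i + j)).const_mul _]
      refine Finset.sum_congr rfl fun j _ => ?_
      rw [integral_const_mul]
      have hmval : (∫ ξ : Fin n → ℝ,
          Real.exp (-∑ l, ξ l ^ 2) * (∑ l, ξ l ^ 2) ^ (i + j)) = m (i + j) := by
        rw [hmdef]
      rw [hmval, hDdef]
      simp only [mul_pow, ← pow_mul]
      ring
    -- nonnegativity of Hfun
    have hHnn : ∀ t : ℝ, 0 ≤ Hfun n κ t := by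
      intro t
      refine integral_nonneg fun ξ => ?_
      exact mul_nonneg (mul_nonneg (mul_nonneg (Real.exp_pos _).le
        (Finset.prod_nonneg fun _ _ => sq_nonneg _))
        (Finset.prod_nonneg fun _ _ => sq_nonneg _))
        (Finset.prod_nonneg fun _ _ => sq_nonneg _)
    -- outer integral
    have hGint : IntegrableOn (fun t : ℝ =>
        ∑ i ∈ Finset.range (M' + 1), ∑ j ∈ Finset.range (K + 1),
          (D i j * κ ^ (2 * (M' - i))) * (Real.exp (-κ * t) * t ^ ((M' - i) + (K - j))))
        (Set.Ioi 0) := by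
      refine integrable_finset_sum _ fun i _ => integrable_finset_sum _ fun j _ => ?_
      exact (integrableOn_exp_mul_pow hκ0 _).const_mul _
    have houter : ∫ t in Set.Ioi (0:ℝ), Real.exp (-κ * t) * Hfun n κ t ≤
        ∫ t in Set.Ioi (0:ℝ),
          ∑ i ∈ Finset.range (M' + 1), ∑ j ∈ Finset.range (K + 1),
            (D i j * κ ^ (2 * (M' - i))) * (Real.exp (-κ * t) * t ^ ((M' - i) + (K - j))) := by
      refine integral_mono_of_nonneg (ae_of_all _ fun t => ?_) hGint
        ((ae_restrict_iff' measurableSet_Ioi).mpr (ae_of_all _ fun t ht => ?_))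
      · exact mul_nonneg (Real.exp_pos _).le (hHnn t)
      · calc Real.exp (-κ * t) * Hfun n κ t
            ≤ Real.exp (-κ * t) *
              (∑ i ∈ Finset.range (M' + 1), ∑ j ∈ Finset.range (K + 1),
                D i j * (κ ^ (2 * (M' - i)) * t ^ ((M' - i) + (K - j)))) :=
              mul_le_mul_of_nonneg_left (hH t ht) (Real.exp_pos _).le
          _ = ∑ i ∈ Finset.range (M' + 1), ∑ j ∈ Finset.range (K + 1),
                (D i j * κ ^ (2 * (M' - i))) * (Real.exp (-κ * t) * t ^ ((M' - i) + (K - j))) := by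
              rw [Finset.mul_sum]
              refine Finset.sum_congr rfl fun i _ => ?_
              rw [Finset.mul_sum]
              refine Finset.sum_congr rfl fun j _ => ?_
              ring
    have hval : (∫ t in Set.Ioi (0:ℝ),
        ∑ i ∈ Finset.range (M' + 1), ∑ j ∈ Finset.range (K + 1),
          (D i j * κ ^ (2 * (M' - i))) * (Real.exp (-κ * t) * t ^ ((M' - i) + (K - j)))) =
        ∑ i ∈ Finset.range (M' + 1), ∑ j ∈ Finset.range (K + 1),
          (D i j * κ ^ (2 * (M' - i))) *
            ((Nat.factorial ((M' - i) + (K - j)) : ℝ) / κ ^ (((M' - i) + (K - j)) + 1)) := by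
      rw [integral_finset_sum _ fun i _ => integrable_finset_sum _ fun j _ =>
        (integrableOn_exp_mul_pow hκ0 _).const_mul _]
      refine Finset.sum_congr rfl fun i _ => ?_
      rw [integral_finset_sum _ fun j _ => (integrableOn_exp_mul_pow hκ0 _).const_mul _]
      refine Finset.sum_congr rfl fun j _ => ?_
      rw [integral_const_mul, integral_exp_mul_pow hκ0]
    have hterm : ∀ i ∈ Finset.range (M' + 1), ∀ j ∈ Finset.range (K + 1),
        (D i j * κ ^ (2 * (M' - i))) *
            ((Nat.factorial ((M' - i) + (K - j)) : ℝ) / κ ^ (((M' - i) + (K - j)) + 1)) ≤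
          (D i j * (Nat.factorial ((M' - i) + (K - j)) : ℝ)) * κ ^ (M - 1) := by
      intro i hi j hj
      have hi' : i ≤ M' := Nat.lt_succ_iff.mp (Finset.mem_range.mp hi)
      have hj' : j ≤ K := Nat.lt_succ_iff.mp (Finset.mem_range.mp hj)
      have hexp : 2 * (M' - i) ≤ (M - 1) + (((M' - i) + (K - j)) + 1) := by omega
      have hp1 : κ ^ (2 * (M' - i)) ≤ κ ^ ((M - 1) + (((M' - i) + (K - j)) + 1)) :=
        pow_le_pow_right₀ hκ1 hexp
      rw [pow_add] at hp1
      have hκq : (0:ℝ) < κ ^ (((M' - i) + (K - j)) + 1) := pow_pos hκ0 _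
      have hdiv : κ ^ (2 * (M' - i)) / κ ^ (((M' - i) + (K - j)) + 1) ≤ κ ^ (M - 1) :=
        (div_le_iff₀ hκq).mpr hp1
      have hDF : (0:ℝ) ≤ D i j * (Nat.factorial ((M' - i) + (K - j)) : ℝ) :=
        mul_nonneg (hD0 i j) (Nat.cast_nonneg _)
      calc (D i j * κ ^ (2 * (M' - i))) *
              ((Nat.factorial ((M' - i) + (K - j)) : ℝ) / κ ^ (((M' - i) + (K - j)) + 1))
          = (D i j * (Nat.factorial ((M' - i) + (K - j)) : ℝ)) *
              (κ ^ (2 * (M' - i)) / κ ^ (((M' - i) + (K - j)) + 1)) := by ring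
        _ ≤ (D i j * (Nat.factorial ((M' - i) + (K - j)) : ℝ)) * κ ^ (M - 1) :=
            mul_le_mul_of_nonneg_left hdiv hDF
    calc ∫ t in Set.Ioi (0:ℝ), Real.exp (-κ * t) * Hfun n κ t
        ≤ ∑ i ∈ Finset.range (M' + 1), ∑ j ∈ Finset.range (K + 1),
            (D i j * κ ^ (2 * (M' - i))) *
              ((Nat.factorial ((M' - i) + (K - j)) : ℝ) / κ ^ (((M' - i) + (K - j)) + 1)) :=
          houter.trans_eq hval
      _ ≤ ∑ i ∈ Finset.range (M' + 1), ∑ j ∈ Finset.range (K + 1),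
            (D i j * (Nat.factorial ((M' - i) + (K - j)) : ℝ)) * κ ^ (M - 1) :=
          Finset.sum_le_sum fun i hi => Finset.sum_le_sum fun j hj => hterm i hi j hj
      _ = (∑ i ∈ Finset.range (M' + 1), ∑ j ∈ Finset.range (K + 1),
            D i j * (Nat.factorial ((M' - i) + (K - j)) : ℝ)) * κ ^ (M - 1) := by
          rw [Finset.sum_mul]
          refine Finset.sum_congr rfl fun i _ => ?_
          rw [Finset.sum_mul]
      _ ≤ ((∑ i ∈ Finset.range (M' + 1), ∑ j ∈ Finset.range (K + 1),
            D i j * (Nat.factorial ((M' - i) + (K - j)) : ℝ)) + 1) * κ ^ (M - 1) := by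
          refine mul_le_mul_of_nonneg_right (by linarith) (pow_nonneg hκ0.le _)
end
end
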